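/- arXiv:2410.23821 — 14 statements merged into one kernel-verified Lean document; each statement's English description precedes it below -/
import Mathlib

section
/- Let (X,r) be a finite bijective non-degenerate set-theoretic solution of the Yang–Baxter equation whose left derived rack, given by x ◁ y = λ_y(ρ_{λ_x^{-1}(y)}(x)), is a quandle (i.e. x ◁ x = x for all x). Then the right derived rack of (X,r) is also a quandle; equivalently, for every y ∈ X there exists a unique x ∈ X with r(x,y) = (x,y), and for every x ∈ X there is a unique y with r(x,y)=(x,y). -/
open Function

section Defs

variable {X Y : Type*}

/-- `r₁₂ = r × id` on `X³`. -/
def r12 (r : X × X → X × X) : X × X × X → X × X × X :=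
  fun p => ((r (p.1, p.2.1)).1, (r (p.1, p.2.1)).2, p.2.2)

/-- `r₂₃ = id × r` on `X³`. -/
def r23 (r : X × X → X × X) : X × X × X → X × X × X :=
  fun p => (p.1, r p.2)

/-- The Yang--Baxter (braid) equation. -/
def IsYB (r : X × X → X × X) : Prop :=
  (r12 r) ∘ (r23 r) ∘ (r12 r) = (r23 r) ∘ (r12 r) ∘ (r23 r)

/-- The solution map `r(x,y) = (λ_x(y), ρ_y(x))` built from `λ` and `ρ`. -/
def rMap (lam : X → Equiv.Perm X) (rho : X → X → X) : X × X → X × X :=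
  fun p => (lam p.1 p.2, rho p.2 p.1)

/-- `(X, r)` with `r(x,y) = (λ_x(y), ρ_y(x))` is a bijective non-degenerate
set-theoretic solution of the Yang--Baxter equation. -/
def IsSolution (lam : X → Equiv.Perm X) (rho : X → X → X) : Prop :=
  IsYB (rMap lam rho) ∧ Bijective (rMap lam rho) ∧ ∀ y, Bijective (rho y)

/-- The (left) derived operation `σ_y(x) = x ◁ y = λ_y(ρ_{λ_x⁻¹(y)}(x))`. -/
def sigMap (lam : X → Equiv.Perm X) (rho : X → X → X) (y : X) : X → X :=
  fun x => lam y (rho ((lam x).symm y) x)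

/-- A biquandle: a solution whose derived rack is a quandle. -/
def IsBiquandle (lam : X → Equiv.Perm X) (rho : X → X → X) : Prop :=
  IsSolution lam rho ∧ ∀ x, sigMap lam rho x x = x

/-- The diagonal map `q(x) = λ_x⁻¹(x)`. -/
def qMap (lam : X → Equiv.Perm X) : X → X := fun x => (lam x).symm x

/-- `λ` of the `k`-th additive multiple: `λ_{kx}` restricted to `X`,
computed via `kx = x ∘ q(x) ∘ ⋯ ∘ q^{k-1}(x)` and `λ_{a∘b} = λ_a λ_b`. -/
def lamCab (lam : X → Equiv.Perm X) : ℕ → X → Equiv.Perm X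
  | 0, _ => 1
  | k+1, x => lam x * lamCab lam k (qMap lam x)

/-- `σ` of the `k`-th additive multiple: `σ_{ky} = σ_y^k` restricted to `X`. -/
def sigCab (lam : X → Equiv.Perm X) (rho : X → X → X) (k : ℕ) (y : X) : X → X :=
  (sigMap lam rho y)^[k]

/-- `ρ` of the `k`-cabled solution, via `ρ_b(a) = λ_{λ_a(b)}⁻¹ σ_{λ_a(b)}(a)`. -/
def rhoCab (lam : X → Equiv.Perm X) (rho : X → X → X) (k : ℕ) (y x : X) : X :=
  (lamCab lam k (lamCab lam k x y)).symm (sigCab lam rho k (lamCab lam k x y) x)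

/-- The `k`-cabled solution `r^{(k)}`. -/
def rCab (lam : X → Equiv.Perm X) (rho : X → X → X) (k : ℕ) : X × X → X × X :=
  rMap (lamCab lam k) (rhoCab lam rho k)

/-- `f` is a morphism of solutions `(X,r) → (Y,s)`. -/
def IsMor (r : X × X → X × X) (s : Y × Y → Y × Y) (f : X → Y) : Prop :=
  ∀ p, Prod.map f f (r p) = s (Prod.map f f p)

/-- `(X,r)` is `n`-decomposable: a partition into `n` nonempty subsolutions
`X_1, …, X_n` with `r(X_i × X_j) = X_j × X_i`. -/
def NDecomp (r : X × X → X × X) (n : ℕ) : Prop :=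
  ∃ P : Fin n → Set X, (∀ i, (P i).Nonempty) ∧
    (∀ i j, i ≠ j → Disjoint (P i) (P j)) ∧ (⋃ i, P i) = Set.univ ∧
    ∀ i j, r '' ((P i) ×ˢ (P j)) = (P j) ×ˢ (P i)

/-- `(X,r)` is decomposable: a partition `X = Y ⊔ Z` into nonempty parts with
`r(Y×Y) ⊆ Y×Y` and `r(Z×Z) ⊆ Z×Z`. -/
def Decomposable (r : X × X → X × X) : Prop :=
  ∃ A B : Set X, A.Nonempty ∧ B.Nonempty ∧ Disjoint A B ∧ A ∪ B = Set.univ ∧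
    r '' (A ×ˢ A) ⊆ A ×ˢ A ∧ r '' (B ×ˢ B) ⊆ B ×ˢ B

/-- A solution is simple if every epimorphic image is isomorphic to it or a singleton. -/
def SimpleSol {X : Type u} (r : X × X → X × X) : Prop :=
  ∀ (Z : Type u) (s : Z × Z → Z × Z) (f : X → Z),
    Surjective f → IsMor r s f → Bijective f ∨ Subsingleton Z

/-- The image in `Perm X` of the group `S(X,r) = ⟨σ_x⁻¹ : x ∈ X⟩ ⋊ 𝒢(X,r)`
acting on `X` via `(σ_a⁻¹, λ_b, ρ_b⁻¹) · x = σ_a⁻¹ λ_b (x)`: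
the subgroup of `Perm X` generated by all `σ_x` and `λ_x`. -/
def permGroupOf (lam : X → Equiv.Perm X) (rho : X → X → X) : Subgroup (Equiv.Perm X) :=
  Subgroup.closure {g : Equiv.Perm X | (∃ y, ⇑g = sigMap lam rho y) ∨ ∃ y, g = lam y}

/-- Relations `x ∘ y = l(x,y) ∘ ρ(y,x)` defining a structure group. -/
def relsOf (l ρ : X → X → X) : Set (FreeGroup X) :=
  {w | ∃ x y : X, w = FreeGroup.of x * FreeGroup.of y *
      (FreeGroup.of (l x y) * FreeGroup.of (ρ y x))⁻¹}

end Defs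

/-! The fixed pairs of `r` are exactly the pairs `(x, q x)` with `q x = λ_x⁻¹(x)`: the first
coordinate forces `y = q x`, and `x ◁ x = x` unfolds to `ρ_{q x}(x) = q x`. The same identity
shows that `ρ_{q x}` sends `x` and `x'` to the same point whenever `q x = q x'`, so `q` is
injective, hence bijective on a finite set, and the fixed pairs form the graph of a bijection. -/

section FixedPairs

variable {X : Type*} {lam : X → Equiv.Perm X} {rho : X → X → X}

lemma rho_qMap_self_of_sigMap_self {x : X} (h : sigMap lam rho x x = x) :
    rho (qMap lam x) x = qMap lam x :=
  (Equiv.eq_symm_apply (lam x)).mpr h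

lemma rMap_eq_self_iff (hq : ∀ x, sigMap lam rho x x = x) {x y : X} :
    rMap lam rho (x, y) = (x, y) ↔ qMap lam x = y := by
  constructor
  · intro h
    exact (Equiv.symm_apply_eq (lam x)).mpr (congrArg Prod.fst h).symm
  · rintro rfl
    show (lam x (qMap lam x), rho (qMap lam x) x) = _
    rw [rho_qMap_self_of_sigMap_self (hq x), qMap, Equiv.apply_symm_apply]

lemma qMap_injective (hrho : ∀ y, Injective (rho y)) (hq : ∀ x, sigMap lam rho x x = x) :
    Injective (qMap lam) := by
  intro x x' h
  apply hrho (qMap lam x)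
  rw [rho_qMap_self_of_sigMap_self (hq x), h, rho_qMap_self_of_sigMap_self (hq x')]

end FixedPairs

/-- if the left derived rack of a solution is a quandle, then the right
derived rack is a quandle; equivalently, fixed pairs of `r` exist uniquely in each slot. -/
theorem right_derived_rack_is_quandle {X : Type*} [Finite X]
    (lam : X → Equiv.Perm X) (rho : X → X → X)
    (hsol : IsSolution lam rho) (hq : ∀ x, sigMap lam rho x x = x) :
    (∀ y : X, ∃! x : X, rMap lam rho (x, y) = (x, y)) ∧
    (∀ x : X, ∃! y : X, rMap lam rho (x, y) = (x, y)) := by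
  obtain ⟨-, -, hrho⟩ := hsol
  have hbij : Bijective (qMap lam) :=
    Finite.injective_iff_bijective.mp (qMap_injective (fun y => (hrho y).injective) hq)
  simp only [rMap_eq_self_iff hq]
  exact ⟨hbij.existsUnique, fun x => existsUnique_eq'⟩
end

section
/- Let (X,r) be a bijective non-degenerate solution. Then (X,r) is n-decomposable if and only if there exists an epimorphism of solutions from (X,r) onto the n-element twist solution ({0,1,…,n−1}, τ), where τ(x,y) = (y,x). -/
open Function

/-- `(X,r)` is `n`-decomposable iff there is an epimorphism of solutions
onto the `n`-element twist solution. -/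
theorem ndecomp_iff_epi_to_twist {X : Type*} [Finite X]
    (lam : X → Equiv.Perm X) (rho : X → X → X)
    (hsol : IsSolution lam rho) (n : ℕ) (hn : 0 < n) :
    NDecomp (rMap lam rho) n ↔
      ∃ f : X → Fin n, Function.Surjective f ∧
        IsMor (rMap lam rho) (fun p : Fin n × Fin n => (p.2, p.1)) f := by
  constructor
  · rintro ⟨P, hne, hdisj, hcov, hr⟩
    have hmem : ∀ x : X, ∃ i, x ∈ P i := by
      intro x
      have : x ∈ ⋃ i, P i := hcov ▸ Set.mem_univ x
      exact Set.mem_iUnion.mp this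
    classical
    set f : X → Fin n := fun x => (hmem x).choose with hf
    have hfmem : ∀ x, x ∈ P (f x) := fun x => (hmem x).choose_spec
    have huniq : ∀ x i, x ∈ P i → f x = i := by
      intro x i hx
      by_contra h
      exact Set.disjoint_left.mp (hdisj _ _ h) (hfmem x) hx
    refine ⟨f, ?_, ?_⟩
    · intro i
      obtain ⟨x, hx⟩ := hne i
      exact ⟨x, huniq x i hx⟩
    · rintro ⟨x, y⟩
      have h1 : rMap lam rho (x, y) ∈ P (f y) ×ˢ P (f x) := by
        rw [← hr]
        exact ⟨(x, y), ⟨hfmem x, hfmem y⟩, rfl⟩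
      have ha := huniq _ _ h1.1
      have hb := huniq _ _ h1.2
      simp only [Prod.map, IsMor]
      exact Prod.ext ha hb
  · rintro ⟨f, hsurj, hmor⟩
    classical
    refine ⟨fun i => f ⁻¹' {i}, ?_, ?_, ?_, ?_⟩
    · intro i
      obtain ⟨x, hx⟩ := hsurj i
      exact ⟨x, hx⟩
    · intro i j h
      rw [Set.disjoint_left]
      rintro x hx hx'
      exact h (hx.symm.trans hx')
    · ext x; simp
    · intro i j
      apply Set.Subset.antisymm
      · rintro _ ⟨⟨x, y⟩, ⟨hx, hy⟩, rfl⟩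
        have := hmor (x, y)
        simp only [Prod.map] at this
        have h1 : f (rMap lam rho (x, y)).1 = f y := congrArg Prod.fst this
        have h2 : f (rMap lam rho (x, y)).2 = f x := congrArg Prod.snd this
        exact ⟨h1.trans hy, h2.trans hx⟩
      · rintro ⟨a, b⟩ ⟨ha, hb⟩
        obtain ⟨⟨x, y⟩, hxy⟩ := hsol.2.1.2 (a, b)
        have := hmor (x, y)
        rw [hxy] at this
        simp only [Prod.map] at this
        have hfy : f y = f a := congrArg Prod.fst this.symm
        have hfx : f x = f b := congrArg Prod.snd this.symm
        exact ⟨(x, y), ⟨hfx.trans hb, hfy.trans ha⟩, hxy⟩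
end

section
/- A bijective non-degenerate solution (X,r) is decomposable if and only if there exists an epimorphism of solutions f : (X,r) → ({0,1}, τ), where τ is the flip map τ(x,y) = (y,x). -/
open Function

/-! A morphism onto the flip solution is the same as a map `f` with `f ∘ λ_x = f` and
`f ∘ ρ_y = f` for all `x, y`, and its two fibres are a decomposition. Conversely, given a
decomposition `X = A ⊔ B`, each `λ_x` and `ρ_y` maps one of the parts into itself; being
injective on a finite set, it then also maps the other part into itself, so the indicator of `A`
is such an invariant map. -/

theorem Set.MapsTo.mem_iff_of_injective {X : Type*} [Finite X] {g : X → X} {S : Set X}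
    (h : Set.MapsTo g S S) (hg : Injective g) (x : X) : g x ∈ S ↔ x ∈ S :=
  h.mem_iff <| (((Set.toFinite S).injOn_iff_bijOn_of_mapsTo h).1 hg.injOn).surjOn.mapsTo_compl hg

theorem mem_iff_of_mapsTo_or_mapsTo_compl {X : Type*} [Finite X] {g : X → X} {S : Set X}
    (hg : Injective g) (h : Set.MapsTo g S S ∨ Set.MapsTo g Sᶜ Sᶜ) (x : X) :
    g x ∈ S ↔ x ∈ S :=
  h.elim (·.mem_iff_of_injective hg x) fun hc => not_iff_not.1 (hc.mem_iff_of_injective hg x)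

section Flip

variable {X Y : Type*} {lam : X → Equiv.Perm X} {rho : X → X → X}

theorem isMor_flip_iff {f : X → Y} :
    IsMor (rMap lam rho) (fun p : Y × Y => (p.2, p.1)) f ↔
      ∀ x y, f (lam x y) = f y ∧ f (rho y x) = f x := by
  simp [IsMor, rMap, Prod.ext_iff]

theorem image_preimage_prod_subset_of_isMor_flip {f : X → Y}
    (hf : IsMor (rMap lam rho) (fun p : Y × Y => (p.2, p.1)) f) (S : Set Y) :
    rMap lam rho '' ((f ⁻¹' S) ×ˢ (f ⁻¹' S)) ⊆ (f ⁻¹' S) ×ˢ (f ⁻¹' S) := by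
  rintro _ ⟨⟨x, y⟩, ⟨hx, hy⟩, rfl⟩
  obtain ⟨hlam, hrho⟩ := isMor_flip_iff.1 hf x y
  exact ⟨show f (lam x y) ∈ S from hlam ▸ hy, show f (rho y x) ∈ S from hrho ▸ hx⟩

theorem decomposable_of_surjective_isMor_flip {f : X → Fin 2} (hsurj : Surjective f)
    (hf : IsMor (rMap lam rho) (fun p : Fin 2 × Fin 2 => (p.2, p.1)) f) :
    Decomposable (rMap lam rho) := by
  obtain ⟨a, ha⟩ := hsurj 0
  obtain ⟨b, hb⟩ := hsurj 1
  refine ⟨f ⁻¹' {0}, f ⁻¹' {1}, ⟨a, ha⟩, ⟨b, hb⟩, Disjoint.preimage f (by simp),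
    Set.eq_univ_of_forall fun x => ?_,
    image_preimage_prod_subset_of_isMor_flip hf _, image_preimage_prod_subset_of_isMor_flip hf _⟩
  simp only [Set.mem_union, Set.mem_preimage, Set.mem_singleton_iff]
  omega

end Flip

section Decomposition

variable {X : Type*} {lam : X → Equiv.Perm X} {rho : X → X → X} {S A : Set X}

theorem mapsTo_lam_of_image_prod_subset (h : rMap lam rho '' (S ×ˢ S) ⊆ S ×ˢ S) {x : X}
    (hx : x ∈ S) : Set.MapsTo (lam x) S S :=
  fun y hy => (h ⟨(x, y), ⟨hx, hy⟩, rfl⟩).1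

theorem mapsTo_rho_of_image_prod_subset (h : rMap lam rho '' (S ×ˢ S) ⊆ S ×ˢ S) {y : X}
    (hy : y ∈ S) : Set.MapsTo (rho y) S S :=
  fun x hx => (h ⟨(x, y), ⟨hx, hy⟩, rfl⟩).2

variable [Finite X]

theorem lam_mem_iff_of_image_prod_subset (hA : rMap lam rho '' (A ×ˢ A) ⊆ A ×ˢ A)
    (hAc : rMap lam rho '' (Aᶜ ×ˢ Aᶜ) ⊆ Aᶜ ×ˢ Aᶜ) (x y : X) : lam x y ∈ A ↔ y ∈ A :=
  mem_iff_of_mapsTo_or_mapsTo_compl (lam x).injective ((em (x ∈ A)).imp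
    (mapsTo_lam_of_image_prod_subset hA) (mapsTo_lam_of_image_prod_subset hAc)) y

theorem rho_mem_iff_of_image_prod_subset (hrho : ∀ y, Injective (rho y))
    (hA : rMap lam rho '' (A ×ˢ A) ⊆ A ×ˢ A) (hAc : rMap lam rho '' (Aᶜ ×ˢ Aᶜ) ⊆ Aᶜ ×ˢ Aᶜ)
    (y x : X) : rho y x ∈ A ↔ x ∈ A :=
  mem_iff_of_mapsTo_or_mapsTo_compl (hrho y) ((em (y ∈ A)).imp
    (mapsTo_rho_of_image_prod_subset hA) (mapsTo_rho_of_image_prod_subset hAc)) x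

theorem exists_surjective_isMor_flip_of_decomposable (hrho : ∀ y, Injective (rho y))
    (h : Decomposable (rMap lam rho)) :
    ∃ f : X → Fin 2,
      Surjective f ∧ IsMor (rMap lam rho) (fun p : Fin 2 × Fin 2 => (p.2, p.1)) f := by
  classical
  obtain ⟨A, B, ⟨a, ha⟩, ⟨b, hb⟩, hdisj, hcover, hA, hB⟩ := h
  obtain rfl : Aᶜ = B := IsCompl.compl_eq ⟨hdisj, codisjoint_iff.2 hcover⟩
  refine ⟨fun x => if x ∈ A then 0 else 1, ?_, isMor_flip_iff.2 fun x y => ?_⟩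
  · intro i
    fin_cases i
    exacts [⟨a, if_pos ha⟩, ⟨b, if_neg hb⟩]
  · simp only [lam_mem_iff_of_image_prod_subset hA hB, rho_mem_iff_of_image_prod_subset hrho hA hB,
      and_self]

end Decomposition

/-- `(X,r)` is decomposable iff there is an epimorphism of solutions
onto the flip solution on two elements. -/
theorem decomposable_iff_epi_to_flip {X : Type*} [Finite X]
    (lam : X → Equiv.Perm X) (rho : X → X → X)
    (hsol : IsSolution lam rho) :
    Decomposable (rMap lam rho) ↔
      ∃ f : X → Fin 2, Function.Surjective f ∧
        IsMor (rMap lam rho) (fun p : Fin 2 × Fin 2 => (p.2, p.1)) f :=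
  ⟨exists_surjective_isMor_flip_of_decomposable fun y => (hsol.2.2 y).injective,
    fun ⟨_, hsurj, hf⟩ => decomposable_of_surjective_isMor_flip hsurj hf⟩
end

section
/- Let (X,r) be a finite bijective non-degenerate solution and let S(X,r) be the semidirect product group ⟨σ_x^{-1} : x ∈ X⟩ ⋊ G(X,r) acting on X via (σ_a^{-1}, λ_b, ρ_b^{-1})·x = σ_a^{-1}λ_b(x). Then the orbits of X under this action form a decomposition of (X,r), i.e., each orbit Y satisfies λ_x(Y) = Y and ρ_x(Y) = Y for all x ∈ X. -/
open Function

open Pointwise in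
/-- the orbits of `X` under the action of `S(X,r)` form a decomposition:
each orbit `Y` satisfies `λ_x(Y) = Y` and `ρ_x(Y) = Y` for all `x`. -/
theorem orbits_form_decomposition {X : Type*} [Finite X]
    (lam : X → Equiv.Perm X) (rho : X → X → X)
    (hsol : IsSolution lam rho) (x₀ : X) :
    (∀ x : X, (lam x) '' (MulAction.orbit (permGroupOf lam rho) x₀)
      = MulAction.orbit (permGroupOf lam rho) x₀) ∧
    (∀ x : X, (rho x) '' (MulAction.orbit (permGroupOf lam rho) x₀)
      = MulAction.orbit (permGroupOf lam rho) x₀) := by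

  classical
  set G := permGroupOf lam rho with hG
  set O := MulAction.orbit G x₀ with hO
  -- σ_y is bijective
  have hsig : ∀ y, Function.Bijective (sigMap lam rho y) := by
    intro y
    rw [← Finite.injective_iff_bijective]
    intro a b hab
    have hab' : rho ((lam a).symm y) a = rho ((lam b).symm y) b := by
      have := (lam y).injective hab
      simpa [sigMap] using this
    have h1 : rMap lam rho (a, (lam a).symm y) = rMap lam rho (b, (lam b).symm y) := by
      simp [rMap, hab']
    have := hsol.2.1.1 h1
    exact congrArg Prod.fst this
  have hlamG : ∀ x, lam x ∈ G := fun x =>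
    Subgroup.subset_closure (Or.inr ⟨x, rfl⟩)
  have hsigG : ∀ y, Equiv.ofBijective _ (hsig y) ∈ G := fun y =>
    Subgroup.subset_closure (Or.inl ⟨y, rfl⟩)
  -- image of orbit under a group element is the orbit
  have key : ∀ g : Equiv.Perm X, g ∈ G → ⇑g '' O = O := by
    intro g hg
    have h := MulAction.smul_orbit (⟨g, hg⟩ : G) x₀
    rw [hO]
    show (⟨g, hg⟩ : G) • MulAction.orbit G x₀ = MulAction.orbit G x₀
    exact h
  -- membership of orbit is closed under group elements
  have mem_key : ∀ (g : Equiv.Perm X), g ∈ G → ∀ a ∈ O, g a ∈ O := by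
    intro g hg a ha
    rw [← key g hg]
    exact ⟨a, ha, rfl⟩
  constructor
  · intro x; exact key (lam x) (hlamG x)
  · intro x
    have hsub : rho x '' O ⊆ O := by
      rintro _ ⟨a, ha, rfl⟩
      have hformula : rho x a
          = ((lam (lam a x))⁻¹ * Equiv.ofBijective _ (hsig (lam a x))) a := by
        simp [sigMap, Equiv.ofBijective, Equiv.Perm.mul_apply]
      rw [hformula]
      exact mem_key _ (mul_mem (inv_mem (hlamG _)) (hsigG _)) a ha
    have hfin : O.Finite := Set.toFinite O
    have hcard : O.ncard ≤ (rho x '' O).ncard := by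
      rw [Set.ncard_image_of_injective O (hsol.2.2 x).1]
    exact Set.eq_of_subset_of_ncard_le hsub hcard hfin
end

section
/- Let (X,r) be a finite bijective non-degenerate solution. The maximal positive integer n such that (X,r) is n-decomposable equals the number of orbits of X under the action of the group S(X,r) = ⟨σ_x^{-1} : x ∈ X⟩ ⋊ G(X,r). -/
open Function

section Aux

open MulAction

variable {X : Type*} [Finite X] (lam : X → Equiv.Perm X) (rho : X → X → X)

lemma sig_injective (hsol : IsSolution lam rho) (y : X) :
    Injective (sigMap lam rho y) := by
  intro a b h
  have h' : rho ((lam a).symm y) a = rho ((lam b).symm y) b := (lam y).injective h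
  have ha : rMap lam rho (a, (lam a).symm y) = (y, rho ((lam a).symm y) a) := by
    simp [rMap]
  have hb : rMap lam rho (b, (lam b).symm y) = (y, rho ((lam b).symm y) b) := by
    simp [rMap]
  have := hsol.2.1.1 (ha.trans (by rw [h', ← hb]))
  exact congrArg Prod.fst this

/-- `σ_y` as a permutation. -/
noncomputable def sigPerm (hsol : IsSolution lam rho) (y : X) : Equiv.Perm X :=
  Equiv.ofBijective (sigMap lam rho y)
    (Finite.injective_iff_bijective.mp (sig_injective lam rho hsol y))

lemma sigPerm_coe (hsol : IsSolution lam rho) (y : X) :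
    ⇑(sigPerm lam rho hsol y) = sigMap lam rho y := rfl

lemma lam_mem (x : X) : lam x ∈ permGroupOf lam rho :=
  Subgroup.subset_closure (Or.inr ⟨x, rfl⟩)

lemma sigPerm_mem (hsol : IsSolution lam rho) (y : X) :
    sigPerm lam rho hsol y ∈ permGroupOf lam rho :=
  Subgroup.subset_closure (Or.inl ⟨y, sigPerm_coe lam rho hsol y⟩)

lemma rho_eq (x y : X) :
    rho y x = (lam (lam x y)).symm (sigMap lam rho (lam x y) x) := by
  simp [sigMap]

/-- `λ_x y` is in the orbit of `y`. -/
lemma lam_orbit (x y : X) : lam x y ∈ orbit (permGroupOf lam rho) y :=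
  ⟨⟨lam x, lam_mem lam rho x⟩, rfl⟩

/-- `ρ_y x` is in the orbit of `x`. -/
lemma rho_orbit (hsol : IsSolution lam rho) (x y : X) :
    rho y x ∈ orbit (permGroupOf lam rho) x := by
  set z := lam x y with hz
  refine ⟨⟨(lam z)⁻¹ * sigPerm lam rho hsol z,
    mul_mem (inv_mem (lam_mem lam rho z)) (sigPerm_mem lam rho hsol z)⟩, ?_⟩
  show ((lam z)⁻¹ * sigPerm lam rho hsol z) x = rho y x
  rw [Equiv.Perm.mul_apply, rho_eq lam rho x y]
  rfl

/-- A `g` mapping each part into itself maps each part onto itself. -/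
lemma perm_image_eq (g : Equiv.Perm X) (S : Set X) (h : ∀ x ∈ S, g x ∈ S) :
    g '' S = S := by
  refine Set.eq_of_subset_of_ncard_le ?_ ?_ (Set.toFinite _)
  · rintro _ ⟨x, hx, rfl⟩; exact h x hx
  · rw [Set.ncard_image_of_injective S g.injective]

end Aux

/-- the maximal `n` such that `(X,r)` is `n`-decomposable is the number
of orbits of `X` under the action of `S(X,r)`. -/
theorem max_ndecomp_eq_number_of_orbits {X : Type*} [Finite X] [Nonempty X]
    (lam : X → Equiv.Perm X) (rho : X → X → X)
    (hsol : IsSolution lam rho) :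
    IsGreatest {n : ℕ | NDecomp (rMap lam rho) n}
      (Nat.card (MulAction.orbitRel.Quotient (permGroupOf lam rho) X)) := by
  classical
  constructor
  · -- the orbit partition is a decomposition
    set e := (Finite.equivFin (MulAction.orbitRel.Quotient (permGroupOf lam rho) X)).symm
      with he
    show NDecomp (rMap lam rho) _
    refine ⟨fun i => (e i).orbit, ?_, ?_, ?_, ?_⟩
    · intro i
      exact ⟨(e i).out, MulAction.orbitRel.Quotient.mem_orbit.mpr (Quotient.out_eq' _)⟩
    · intro i j hij
      rw [Set.disjoint_left]
      intro x hxi hxj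
      exact hij (e.injective ((MulAction.orbitRel.Quotient.mem_orbit.mp hxi).symm.trans
        (MulAction.orbitRel.Quotient.mem_orbit.mp hxj)))
    · ext x
      simp only [Set.mem_iUnion, Set.mem_univ, iff_true]
      exact ⟨e.symm (Quotient.mk'' x),
        MulAction.orbitRel.Quotient.mem_orbit.mpr (by simp)⟩
    · intro i j
      have hsub : rMap lam rho '' ((e i).orbit ×ˢ (e j).orbit) ⊆
          (e j).orbit ×ˢ (e i).orbit := by
        rintro _ ⟨⟨x, y⟩, ⟨hx, hy⟩, rfl⟩
        constructor
        · rw [MulAction.orbitRel.Quotient.mem_orbit] at hy ⊢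
          rw [← hy]
          exact Quotient.eq''.mpr (MulAction.orbitRel_apply.mpr (lam_orbit lam rho x y))
        · rw [MulAction.orbitRel.Quotient.mem_orbit] at hx ⊢
          rw [← hx]
          exact Quotient.eq''.mpr (MulAction.orbitRel_apply.mpr (rho_orbit lam rho hsol x y))
      refine Set.eq_of_subset_of_ncard_le hsub ?_ (Set.toFinite _)
      show ((e j).orbit ×ˢ (e i).orbit).ncard ≤
        (rMap lam rho '' ((e i).orbit ×ˢ (e j).orbit)).ncard
      apply le_of_eq
      calc ((e j).orbit ×ˢ (e i).orbit).ncard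
          = (Prod.swap '' ((e i).orbit ×ˢ (e j).orbit)).ncard := by
            rw [Set.image_swap_prod]
        _ = ((e i).orbit ×ˢ (e j).orbit).ncard :=
            Set.ncard_image_of_injective _ Prod.swap_injective
        _ = (rMap lam rho '' ((e i).orbit ×ˢ (e j).orbit)).ncard :=
            (Set.ncard_image_of_injective _ hsol.2.1.1).symm
  · -- any decomposition has at most (number of orbits) parts
    rintro n ⟨P, hne, hdis, huniv, himg⟩
    have hmem : ∀ x : X, ∃ i, x ∈ P i := by
      intro x
      have : x ∈ ⋃ i, P i := huniv ▸ Set.mem_univ x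
      simpa [Set.mem_iUnion] using this
    have hlam : ∀ (z : X) (i : Fin n) (x : X), x ∈ P i → lam z x ∈ P i := by
      intro z i x hx
      obtain ⟨j, hj⟩ := hmem z
      have : rMap lam rho (z, x) ∈ P i ×ˢ P j := by
        rw [← himg j i]; exact ⟨(z, x), ⟨hj, hx⟩, rfl⟩
      exact this.1
    have hrho : ∀ (z : X) (i : Fin n) (x : X), x ∈ P i → rho z x ∈ P i := by
      intro z i x hx
      obtain ⟨j, hj⟩ := hmem z
      have : rMap lam rho (x, z) ∈ P j ×ˢ P i := by
        rw [← himg i j]; exact ⟨(x, z), ⟨hx, hj⟩, rfl⟩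
      exact this.2
    let K : Subgroup (Equiv.Perm X) :=
      { carrier := {g | ∀ (i : Fin n) (x : X), x ∈ P i → g x ∈ P i}
        one_mem' := fun i x hx => hx
        mul_mem' := fun {a b} ha hb i x hx => ha i _ (hb i x hx)
        inv_mem' := fun {g} hg i x hx => by
          have himeq := perm_image_eq g (P i) (hg i)
          rw [← himeq] at hx
          obtain ⟨y, hy, hyx⟩ := hx
          rw [← hyx]
          simpa using hy }
    have hGK : permGroupOf lam rho ≤ K := by
      rw [permGroupOf, Subgroup.closure_le]
      rintro g (⟨y, hgy⟩ | ⟨y, rfl⟩)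
      · intro i x hx
        show g x ∈ P i
        rw [hgy]
        exact hlam y i _ (hrho ((lam x).symm y) i x hx)
      · exact fun i x hx => hlam y i x hx
    choose c hc using hne
    have hinj : Function.Injective (fun i : Fin n =>
        (Quotient.mk'' (c i) : MulAction.orbitRel.Quotient (permGroupOf lam rho) X)) := by
      intro i j hij
      by_contra hne'
      obtain ⟨g, hg⟩ := MulAction.orbitRel_apply.mp (Quotient.eq''.mp hij)
      have hci : c i ∈ P j := by
        rw [← hg]
        exact hGK g.2 j (c j) (hc j)
      exact Set.disjoint_left.mp (hdis i j hne') (hc i) hci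
    simpa using Nat.card_le_card_of_injective _ hinj
end

section
/- Let (X,r) be a finite bijective non-degenerate solution. If (X,r) is n-decomposable, then its derived solution (X,s), where s(x,y) = (y, σ_y(x)) with σ_y(x) = λ_y(ρ_{λ_x^{-1}(y)}(x)), is also n-decomposable. -/
open Function

/-- if `(X,r)` is `n`-decomposable, then so is its derived solution
`s(x,y) = (y, σ_y(x))`. -/
theorem derived_ndecomp {X : Type*} [Finite X]
    (lam : X → Equiv.Perm X) (rho : X → X → X)
    (hsol : IsSolution lam rho) (n : ℕ)
    (h : NDecomp (rMap lam rho) n) :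
    NDecomp (fun p : X × X => (p.2, sigMap lam rho p.2 p.1)) n := by
  obtain ⟨P, hne, hdisj, huniv, hmap⟩ := h
  have hmem : ∀ x : X, ∃ i, x ∈ P i := by
    intro x
    have : x ∈ ⋃ i, P i := huniv ▸ Set.mem_univ x
    exact Set.mem_iUnion.mp this
  have hlam : ∀ i j x y, x ∈ P i → y ∈ P j → lam x y ∈ P j ∧ rho y x ∈ P i := by
    intro i j x y hx hy
    have hm : rMap lam rho (x, y) ∈ P j ×ˢ P i := by
      rw [← hmap i j]; exact ⟨(x, y), ⟨hx, hy⟩, rfl⟩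
    exact ⟨hm.1, hm.2⟩
  have hlaminv : ∀ i j x y, x ∈ P i → y ∈ P j → (lam x).symm y ∈ P j := by
    intro i j x y hx hy
    have hmapsTo : Set.MapsTo (lam x) (P j) (P j) := fun z hz => (hlam i j x z hx hz).1
    have hbij : Set.BijOn (lam x) (P j) (P j) :=
      ((Set.toFinite (P j)).injOn_iff_bijOn_of_mapsTo hmapsTo).mp ((lam x).injective.injOn)
    obtain ⟨z, hz, hz2⟩ := hbij.surjOn hy
    have : z = (lam x).symm y := by
      apply (lam x).injective; simpa using hz2
    rwa [← this]
  have hsig : ∀ i j x y, x ∈ P i → y ∈ P j → sigMap lam rho y x ∈ P i := by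
    intro i j x y hx hy
    have h1 := hlaminv i j x y hx hy
    have h2 := (hlam i j x _ hx h1).2
    exact (hlam j i y _ hy h2).1
  have hsigsurj : ∀ y a : X, ∃ x, sigMap lam rho y x = a := by
    intro y a
    obtain ⟨⟨x, z⟩, hxz⟩ := hsol.2.1.surjective (y, (lam y).symm a)
    refine ⟨x, ?_⟩
    have h1 : lam x z = y := congrArg Prod.fst hxz
    have h2 : rho z x = (lam y).symm a := congrArg Prod.snd hxz
    unfold sigMap
    have hz : (lam x).symm y = z := by rw [← h1]; simp
    rw [hz, h2]; simp
  refine ⟨P, hne, hdisj, huniv, ?_⟩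
  intro i j
  apply Set.Subset.antisymm
  · rintro ⟨py, ps⟩ ⟨⟨x, y⟩, ⟨hx, hy⟩, heq⟩
    simp only [Prod.mk.injEq] at heq
    obtain ⟨h1, h2⟩ := heq
    subst h1; subst h2
    exact ⟨hy, hsig i j x y hx hy⟩
  · rintro ⟨b, a⟩ ⟨hb, ha⟩
    obtain ⟨x, hxa⟩ := hsigsurj b a
    obtain ⟨k, hk⟩ := hmem x
    have hak : a ∈ P k := hxa ▸ hsig k j x b hk hb
    have hki : k = i := by
      by_contra hne'
      exact Set.disjoint_left.mp (hdisj k i hne') hak ha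
    subst hki
    exact ⟨(x, b), ⟨hk, hb⟩, by simp [hxa]⟩
end

section
/- Let (X,r) be a finite bijective non-degenerate solution and let Inj(X,r) denote its injectivization, the image of X in the structure group G(X,r) with the induced solution. Then (X,r) is n-decomposable if and only if Inj(X,r) is n-decomposable. -/
open Function

/-- Auxiliary: for a partition realizing an `n`-decomposition, elements of `X`
identified in the structure group lie in the same part. -/
theorem key_same_part {X : Type*} (lam : X → Equiv.Perm X) (rho : X → X → X) (n : ℕ)
    (P : Fin n → Set X)
    (hdisj : ∀ i j, i ≠ j → Disjoint (P i) (P j))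
    (hcov : (⋃ i, P i) = Set.univ)
    (himg : ∀ i j, rMap lam rho '' ((P i) ×ˢ (P j)) = (P j) ×ˢ (P i))
    {x y : X}
    (hxy : (PresentedGroup.of x : PresentedGroup (relsOf (fun x y => lam x y) rho)) =
      PresentedGroup.of y)
    {a b : Fin n} (ha : x ∈ P a) (hb : y ∈ P b) : a = b := by
  have hcov' : ∀ z : X, ∃ k, z ∈ P k := fun z => Set.mem_iUnion.mp (hcov ▸ Set.mem_univ z)
  set fIdx : X → Fin n := fun z => (hcov' z).choose with hfIdx
  have hmem : ∀ z, z ∈ P (fIdx z) := fun z => (hcov' z).choose_spec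
  have huniq : ∀ z k, z ∈ P k → fIdx z = k := by
    intro z k hk
    by_contra hne
    exact Set.disjoint_left.mp (hdisj _ _ hne) (hmem z) hk
  set g : X → Multiplicative (Fin n → ℤ) :=
    fun z => Multiplicative.ofAdd (Pi.single (fIdx z) 1) with hg
  have hrel : ∀ w ∈ relsOf (fun a b => lam a b) rho, FreeGroup.lift g w = 1 := by
    rintro w ⟨x', y', rfl⟩
    have hmem2 : (lam x' y', rho y' x') ∈ (P (fIdx y')) ×ˢ (P (fIdx x')) := by
      rw [← himg (fIdx x') (fIdx y')]
      exact ⟨(x', y'), ⟨hmem x', hmem y'⟩, rfl⟩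
    have h1 : fIdx (lam x' y') = fIdx y' := huniq _ _ hmem2.1
    have h2 : fIdx (rho y' x') = fIdx x' := huniq _ _ hmem2.2
    simp only [map_mul, map_inv, FreeGroup.lift_apply_of]
    rw [mul_inv_eq_one]
    show g x' * g y' = g (lam x' y') * g (rho y' x')
    rw [hg]
    simp only [h1, h2]
    exact mul_comm _ _
  have hφ := PresentedGroup.toGroup.of hrel (x := x)
  have hφ' := PresentedGroup.toGroup.of hrel (x := y)
  have hgxy : g x = g y := by rw [← hφ, ← hφ', hxy]
  simp only [hg] at hgxy
  have hfeq : fIdx x = fIdx y := by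
    by_contra hne
    have := congrFun (congrArg Multiplicative.toAdd hgxy) (fIdx x)
    rw [toAdd_ofAdd, toAdd_ofAdd] at this
    rw [Pi.single_eq_same, Pi.single_eq_of_ne hne] at this
    exact one_ne_zero this
  rw [← huniq x a ha, ← huniq y b hb, hfeq]

/-- `(X,r)` is `n`-decomposable iff its injectivization (the image of
`X` in the structure group `G(X,r)` with the induced solution) is `n`-decomposable. -/
theorem ndecomp_iff_injectivization_ndecomp {X : Type*} [Finite X]
    (lam : X → Equiv.Perm X) (rho : X → X → X)
    (hsol : IsSolution lam rho) (n : ℕ)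
    (i : X → PresentedGroup (relsOf (fun x y => lam x y) rho))
    (hi : i = fun x => PresentedGroup.of x)
    (rI : Quotient (Setoid.ker i) × Quotient (Setoid.ker i) →
          Quotient (Setoid.ker i) × Quotient (Setoid.ker i))
    (hrI : ∀ x y : X,
      rI (Quotient.mk (Setoid.ker i) x, Quotient.mk (Setoid.ker i) y) =
        (Quotient.mk (Setoid.ker i) (rMap lam rho (x, y)).1,
         Quotient.mk (Setoid.ker i) (rMap lam rho (x, y)).2)) :
    NDecomp (rMap lam rho) n ↔ NDecomp rI n := by
  set π : X → Quotient (Setoid.ker i) := Quotient.mk (Setoid.ker i) with hπ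
  have hsurj : Function.Surjective π := fun q => Quot.exists_rep q
  have hrI' : ∀ x y : X, rI (π x, π y) = (π (lam x y), π (rho y x)) := fun x y => hrI x y
  constructor
  · rintro ⟨P, hne, hdisj, hcov, himg⟩
    refine ⟨fun k => π '' P k, fun k => (hne k).image π, ?_, ?_, ?_⟩
    · intro a b hab
      rw [Set.disjoint_left]
      rintro q ⟨x, hx, rfl⟩ ⟨y, hy, hqy⟩
      have hiyx : i y = i x := Quotient.exact hqy
      have hof : (PresentedGroup.of y : PresentedGroup (relsOf (fun x y => lam x y) rho)) =
          PresentedGroup.of x := by rw [hi] at hiyx; exact hiyx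
      exact hab (key_same_part lam rho n P hdisj hcov himg hof hy hx).symm
    · rw [← Set.image_iUnion, hcov, Set.image_univ, Set.range_eq_univ]
      exact hsurj
    · intro a b
      ext ⟨u, v⟩
      constructor
      · rintro ⟨⟨p, q⟩, ⟨hp, hq⟩, hr⟩
        obtain ⟨x, hx, rfl⟩ := hp
        obtain ⟨y, hy, rfl⟩ := hq
        rw [hrI'] at hr
        have hin : rMap lam rho (x, y) ∈ (P b) ×ˢ (P a) := by
          rw [← himg a b]; exact ⟨(x, y), ⟨hx, hy⟩, rfl⟩
        have h1 : π (lam x y) = u := congrArg Prod.fst hr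
        have h2 : π (rho y x) = v := congrArg Prod.snd hr
        have hin1 : lam x y ∈ P b := hin.1
        have hin2 : rho y x ∈ P a := hin.2
        exact ⟨⟨lam x y, hin1, h1⟩, ⟨rho y x, hin2, h2⟩⟩
      · rintro ⟨⟨a', ha', rfl⟩, ⟨b', hb', rfl⟩⟩
        have hin : (a', b') ∈ rMap lam rho '' ((P a) ×ˢ (P b)) := by
          rw [himg a b]; exact ⟨ha', hb'⟩
        obtain ⟨⟨x, y⟩, ⟨hx, hy⟩, hxy⟩ := hin
        have h1 : lam x y = a' := congrArg Prod.fst hxy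
        have h2 : rho y x = b' := congrArg Prod.snd hxy
        refine ⟨(π x, π y), ⟨⟨x, hx, rfl⟩, ⟨y, hy, rfl⟩⟩, ?_⟩
        rw [hrI', h1, h2]
  · rintro ⟨P, hne, hdisj, hcov, himg⟩
    refine ⟨fun k => π ⁻¹' P k, ?_, ?_, ?_, ?_⟩
    · intro k
      obtain ⟨q, hq⟩ := hne k
      obtain ⟨x, rfl⟩ := hsurj q
      exact ⟨x, hq⟩
    · intro a b hab
      exact (hdisj a b hab).preimage π
    · rw [← Set.preimage_iUnion, hcov, Set.preimage_univ]
    · intro a b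
      ext ⟨u, v⟩
      constructor
      · rintro ⟨⟨x, y⟩, ⟨hx, hy⟩, hr⟩
        have hin : rI (π x, π y) ∈ (P b) ×ˢ (P a) := by
          rw [← himg a b]; exact ⟨(π x, π y), ⟨hx, hy⟩, rfl⟩
        rw [hrI'] at hin
        have h1 : lam x y = u := congrArg Prod.fst hr
        have h2 : rho y x = v := congrArg Prod.snd hr
        rw [h1, h2] at hin
        exact ⟨hin.1, hin.2⟩
      · rintro ⟨hu, hv⟩
        obtain ⟨⟨x, y⟩, hxy⟩ := hsol.2.1.2 (u, v)
        obtain ⟨k, hk⟩ : ∃ k, π x ∈ P k := Set.mem_iUnion.mp (hcov ▸ Set.mem_univ _)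
        obtain ⟨l, hl⟩ : ∃ l, π y ∈ P l := Set.mem_iUnion.mp (hcov ▸ Set.mem_univ _)
        have hin : rI (π x, π y) ∈ (P l) ×ˢ (P k) := by
          rw [← himg k l]; exact ⟨(π x, π y), ⟨hk, hl⟩, rfl⟩
        rw [hrI'] at hin
        have h1 : lam x y = u := congrArg Prod.fst hxy
        have h2 : rho y x = v := congrArg Prod.snd hxy
        rw [h1, h2] at hin
        have hlb : l = b := by
          by_contra hne'
          exact Set.disjoint_left.mp (hdisj l b hne') hin.1 hu
        have hka : k = a := by
          by_contra hne'
          exact Set.disjoint_left.mp (hdisj k a hne') hin.2 hv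
        exact ⟨(x, y), ⟨hka ▸ hk, hlb ▸ hl⟩, hxy⟩
end

section
/- Let (X,r) be a finite bijective non-degenerate solution and BQ(X,r) its associated biquandle, the quotient of X by the smallest equivalence relation with x ∼ λ_x(y) whenever y = ρ_y(x). Then (X,r) is n-decomposable if and only if BQ(X,r) is n-decomposable. -/
open Function

/-- The defining relation of the associated biquandle: `x ∼ λ_x(y)` whenever `y = ρ_y(x)`. -/
def bqRel {X : Type*} (lam : X → Equiv.Perm X) (rho : X → X → X) (x z : X) : Prop :=
  ∃ y : X, rho y x = y ∧ z = lam x y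

/-- `(X,r)` is `n`-decomposable iff its associated biquandle `BQ(X,r)`,
the quotient by the smallest equivalence relation generated by `bqRel`, is
`n`-decomposable. -/
theorem ndecomp_iff_biquandle_ndecomp {X : Type*} [Finite X]
    (lam : X → Equiv.Perm X) (rho : X → X → X)
    (hsol : IsSolution lam rho) (n : ℕ)
    (rB : Quotient (Relation.EqvGen.setoid (bqRel lam rho)) × Quotient (Relation.EqvGen.setoid (bqRel lam rho)) →
          Quotient (Relation.EqvGen.setoid (bqRel lam rho)) × Quotient (Relation.EqvGen.setoid (bqRel lam rho)))
    (hrB : ∀ x y : X,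
      rB (Quotient.mk (Relation.EqvGen.setoid (bqRel lam rho)) x,
          Quotient.mk (Relation.EqvGen.setoid (bqRel lam rho)) y) =
        (Quotient.mk (Relation.EqvGen.setoid (bqRel lam rho)) (rMap lam rho (x, y)).1,
         Quotient.mk (Relation.EqvGen.setoid (bqRel lam rho)) (rMap lam rho (x, y)).2)) :
    NDecomp (rMap lam rho) n ↔ NDecomp rB n := by
  classical
  set π : X → Quotient (Relation.EqvGen.setoid (bqRel lam rho)) :=
    Quotient.mk (Relation.EqvGen.setoid (bqRel lam rho)) with hπdef
  have hπsurj : Function.Surjective π := Quotient.mk_surjective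
  constructor
  · rintro ⟨P, hne, hdisj, hcov, himg⟩
    have hmem : ∀ x : X, ∃ i, x ∈ P i := by
      intro x
      have hx : x ∈ ⋃ i, P i := hcov ▸ Set.mem_univ x
      simpa using hx
    -- blocks are closed under the generating relation
    have hstep : ∀ x z : X, bqRel lam rho x z → ∀ i, x ∈ P i → z ∈ P i := by
      rintro x z ⟨y, hy, rfl⟩ i hx
      obtain ⟨j, hyj⟩ := hmem y
      have h1 : rMap lam rho (x, y) ∈ P j ×ˢ P i := by
        rw [← himg i j]; exact ⟨(x, y), ⟨hx, hyj⟩, rfl⟩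
      have hzy : rMap lam rho (x, y) = (lam x y, y) := by
        simp [rMap, hy]
      rw [hzy] at h1
      rcases h1 with ⟨hz, hyi⟩
      by_cases hij : i = j
      · exact hij ▸ hz
      · exact absurd hyj (Set.disjoint_left.mp (hdisj i j hij) hyi)
    have hkey : ∀ {x z : X}, Relation.EqvGen (bqRel lam rho) x z →
        ∀ i, x ∈ P i → z ∈ P i := by
      intro x z h
      induction h with
      | rel a b hab => exact hstep a b hab
      | refl a => exact fun i h => h
      | symm a b hab ih =>
          intro i hb
          obtain ⟨j, haj⟩ := hmem a
          have hbj : b ∈ P j := ih j haj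
          by_cases hij : i = j
          · exact hij ▸ haj
          · exact absurd hbj (Set.disjoint_left.mp (hdisj i j hij) hb)
      | trans a b c hab hbc ih1 ih2 => exact fun i ha => ih2 i (ih1 i ha)
    refine ⟨fun i => π '' P i, fun i => (hne i).image π, ?_, ?_, ?_⟩
    · intro i j hij
      rw [Set.disjoint_left]
      rintro u ⟨a, ha, rfl⟩ ⟨b, hb, hab⟩
      have hab' : Relation.EqvGen (bqRel lam rho) b a := Quotient.exact hab
      have : a ∈ P j := hkey hab' j hb
      exact absurd this (Set.disjoint_left.mp (hdisj i j hij) ha)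
    · apply Set.eq_univ_of_forall
      intro u
      obtain ⟨x, rfl⟩ := hπsurj u
      obtain ⟨i, hi⟩ := hmem x
      exact Set.mem_iUnion.mpr ⟨i, ⟨x, hi, rfl⟩⟩
    · intro i j
      apply Set.Subset.antisymm
      · rintro p ⟨⟨u, v⟩, ⟨⟨a, ha, rfl⟩, ⟨b, hb, rfl⟩⟩, rfl⟩
        have hr : rMap lam rho (a, b) ∈ P j ×ˢ P i := by
          rw [← himg i j]; exact ⟨(a, b), ⟨ha, hb⟩, rfl⟩
        rw [hrB a b]
        exact ⟨⟨(rMap lam rho (a, b)).1, hr.1, rfl⟩, ⟨(rMap lam rho (a, b)).2, hr.2, rfl⟩⟩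
      · rintro ⟨u, v⟩ ⟨⟨c, hc, rfl⟩, ⟨d, hd, rfl⟩⟩
        have hcd : (c, d) ∈ rMap lam rho '' (P i ×ˢ P j) := by
          rw [himg i j]; exact ⟨hc, hd⟩
        obtain ⟨⟨a, b⟩, ⟨ha, hb⟩, heq⟩ := hcd
        refine ⟨(π a, π b), ⟨⟨a, ha, rfl⟩, ⟨b, hb, rfl⟩⟩, ?_⟩
        rw [hrB a b, heq]
  · rintro ⟨Q, hne, hdisj, hcov, himg⟩
    set P : Fin n → Set X := fun i => π ⁻¹' (Q i) with hP
    have hmem : ∀ x : X, ∃ i, x ∈ P i := by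
      intro x
      have hx : π x ∈ ⋃ i, Q i := hcov ▸ Set.mem_univ _
      simpa [hP] using hx
    have hsub : ∀ i j, rMap lam rho '' (P i ×ˢ P j) ⊆ P j ×ˢ P i := by
      rintro i j p ⟨⟨a, b⟩, ⟨ha, hb⟩, rfl⟩
      have h1 : rB (π a, π b) ∈ Q j ×ˢ Q i := by
        rw [← himg i j]; exact ⟨(π a, π b), ⟨ha, hb⟩, rfl⟩
      rw [hrB a b] at h1
      exact ⟨h1.1, h1.2⟩
    refine ⟨P, ?_, ?_, ?_, ?_⟩
    · intro i
      obtain ⟨u, hu⟩ := hne i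
      obtain ⟨x, rfl⟩ := hπsurj u
      exact ⟨x, hu⟩
    · exact fun i j hij => (hdisj i j hij).preimage π
    · apply Set.eq_univ_of_forall
      intro x
      obtain ⟨i, hi⟩ := hmem x
      exact Set.mem_iUnion.mpr ⟨i, hi⟩
    · intro i j
      apply Set.Subset.antisymm (hsub i j)
      rintro ⟨c, d⟩ ⟨hc, hd⟩
      obtain ⟨⟨a, b⟩, heq⟩ := hsol.2.1.2 (c, d)
      obtain ⟨i', ha⟩ := hmem a
      obtain ⟨j', hb⟩ := hmem b
      have h1 : (c, d) ∈ P j' ×ˢ P i' := by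
        rw [← heq]; exact hsub i' j' ⟨(a, b), ⟨ha, hb⟩, rfl⟩
      have hj : j' = j := by
        by_contra hjj
        exact absurd hc (Set.disjoint_left.mp (hdisj j' j hjj) h1.1)
      have hi : i' = i := by
        by_contra hii
        exact absurd hd (Set.disjoint_left.mp (hdisj i' i hii) h1.2)
      exact ⟨(a, b), ⟨hi ▸ ha, hj ▸ hb⟩, heq⟩
end

section
/- Let (X,r) be a finite bijective non-degenerate solution with structure monoid M(X,r) carrying its additive structure (M,+) transported from the derived monoid A(X,r) via the bijective 1-cocycle π. For any positive integer k, the subset kX = {kx : x ∈ X} of M(X,r) is closed under the extended solution r_M, i.e., (kX, r_M restricted to kX × kX) is a subsolution of (M(X,r), r_M). -/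
open Function

/-- Abstract data of the structure monoid `M(X,r)` of a solution: the multiplication
`∘`, the additive operation `+` transported from `A(X,r)` along the bijective
`1`-cocycle, the canonical embedding `ι : X → M`, and the maps `λ_a, σ_a`, which are
additive automorphisms, satisfying `a∘b = a + λ_a(b)`, `a + b = b + σ_b(a)` and
mapping (the image of) `X` bijectively to itself. -/
structure SMData (X : Type*) (M : Type*) where
  mul : M → M → M
  add : M → M → M
  iota : X → M
  iota_inj : Function.Injective iota
  lam : M → M ≃ M
  sig : M → M ≃ M
  lam_add : ∀ a b c, lam a (add b c) = add (lam a b) (lam a c)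
  sig_add : ∀ a b c, sig a (add b c) = add (sig a b) (sig a c)
  mul_eq : ∀ a b, mul a b = add a (lam a b)
  add_comm' : ∀ a b, add a b = add b (sig b a)
  lam_X : ∀ a x, ∃ y, lam a (iota x) = iota y
  lam_X_symm : ∀ a x, ∃ y, (lam a).symm (iota x) = iota y
  sig_X : ∀ a x, ∃ y, sig a (iota x) = iota y

/-- `addPow add k a` is the `(k+1)`-fold sum `a + a + ⋯ + a`. -/
def addPow {M : Type*} (add : M → M → M) : ℕ → M → M
  | 0, a => a
  | k+1, a => add a (addPow add k a)

/-- The extended solution `r_M(a,b) = (λ_a(b), ρ_b(a))` on the structure monoid,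
where `ρ_b(a) = λ_{λ_a(b)}⁻¹ σ_{λ_a(b)}(a)`. -/
def SMData.rM {X M : Type*} (D : SMData X M) (p : M × M) : M × M :=
  (D.lam p.1 p.2, (D.lam (D.lam p.1 p.2)).symm (D.sig (D.lam p.1 p.2) p.1))

lemma lam_addPow {X M : Type*} (D : SMData X M) (a : M) (k : ℕ) (m : M) :
    D.lam a (addPow D.add k m) = addPow D.add k (D.lam a m) := by
  induction k with
  | zero => rfl
  | succ n ih => simp [addPow, D.lam_add, ih]

lemma sig_addPow {X M : Type*} (D : SMData X M) (a : M) (k : ℕ) (m : M) :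
    D.sig a (addPow D.add k m) = addPow D.add k (D.sig a m) := by
  induction k with
  | zero => rfl
  | succ n ih => simp [addPow, D.sig_add, ih]

lemma lam_symm_add {X M : Type*} (D : SMData X M) (a : M) (b c : M) :
    (D.lam a).symm (D.add b c) = D.add ((D.lam a).symm b) ((D.lam a).symm c) := by
  apply (D.lam a).injective
  simp [D.lam_add]

lemma lam_symm_addPow {X M : Type*} (D : SMData X M) (a : M) (k : ℕ) (m : M) :
    (D.lam a).symm (addPow D.add k m) = addPow D.add k ((D.lam a).symm m) := by
  induction k with
  | zero => rfl
  | succ n ih => simp [addPow, lam_symm_add, ih]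

/-- for every positive integer (`k+1` below), the set
`kX = {kx : x ∈ X} ⊆ M(X,r)` is closed under the extended solution `r_M`, i.e.
it is a subsolution of `(M(X,r), r_M)`. -/
theorem kX_is_subsolution {X M : Type*} [Finite X]
    (lam : X → Equiv.Perm X) (rho : X → X → X) (hsol : IsSolution lam rho)
    (D : SMData X M)
    (hlam : ∀ x y : X, D.lam (D.iota x) (D.iota y) = D.iota (lam x y))
    (hsig : ∀ x y : X, D.sig (D.iota x) (D.iota y) = D.iota (sigMap lam rho x y))
    (k : ℕ) (x y : X) :
    (D.rM (addPow D.add k (D.iota x), addPow D.add k (D.iota y))).1 ∈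
      Set.range (fun z : X => addPow D.add k (D.iota z)) ∧
    (D.rM (addPow D.add k (D.iota x), addPow D.add k (D.iota y))).2 ∈
      Set.range (fun z : X => addPow D.add k (D.iota z)) := by
  set a := addPow D.add k (D.iota x) with ha
  set b := addPow D.add k (D.iota y) with hb
  obtain ⟨y', hy'⟩ := D.lam_X a y
  have h1 : (D.rM (a, b)).1 = addPow D.add k (D.iota y') := by
    simp only [SMData.rM, hb, lam_addPow, hy']
  constructor
  · exact ⟨y', h1.symm⟩
  · set c := (D.rM (a, b)).1 with hc
    obtain ⟨x', hx'⟩ := D.sig_X c x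
    obtain ⟨x'', hx''⟩ := D.lam_X_symm c x'
    refine ⟨x'', ?_⟩
    show addPow D.add k (D.iota x'') = (D.rM (a, b)).2
    have : (D.rM (a, b)).2 = (D.lam c).symm (D.sig c a) := rfl
    rw [this, ha, sig_addPow, hx', lam_symm_addPow, hx'']
end

section
/- Let (X,r) be a finite biquandle (bijective non-degenerate solution with quandle derived rack) and k a positive integer. Then the k-cabled solution (X, r^{(k)}), obtained by pulling back the subsolution on kX ⊆ M(X,r) along the bijection x ↦ kx, is again a biquandle; i.e., σ^{(k)}_x(x) = x for all x ∈ X, where σ^{(k)}_x = σ_{kx} restricted to X. -/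
open Function

section Aux1
variable {X : Type*} {lam : X → Equiv.Perm X} {rho : X → X → X}

lemma sig_lam (x y : X) : sigMap lam rho (lam x y) x = lam (lam x y) (rho y x) := by
  simp [sigMap]

lemma ybE (h : IsYB (rMap lam rho)) (x y z : X) :
    lam (lam x y) (lam (rho y x) z) = lam x (lam y z) ∧
    rho (lam (rho y x) z) (lam x y) = lam (rho (lam y z) x) (rho z y) ∧
    rho z (rho y x) = rho (rho z y) (rho (lam y z) x) := by
  have h' := congrFun h (x, y, z)
  simpa [r12, r23, rMap, Function.comp, Prod.ext_iff] using h'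

lemma lam_sig (h : IsYB (rMap lam rho)) (g v w : X) :
    lam g (sigMap lam rho v w) = sigMap lam rho (lam g v) (lam g w) := by
  have hc : (lam (lam g w)).symm (lam g v) = lam (rho w g) ((lam w).symm v) := by
    rw [Equiv.symm_apply_eq]
    have h1 := (ybE h g w ((lam w).symm v)).1
    simpa using h1.symm
  have : sigMap lam rho (lam g v) (lam g w)
      = lam (lam g v) (rho (lam (rho w g) ((lam w).symm v)) (lam g w)) := by
    rw [sigMap, hc]
  rw [this, (ybE h g w ((lam w).symm v)).2.1]
  simp only [Equiv.apply_symm_apply]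
  rw [(ybE h g v (rho ((lam w).symm v) w)).1]
  rfl

lemma rack (h : IsYB (rMap lam rho)) (z y x : X) :
    sigMap lam rho z (sigMap lam rho y x)
      = sigMap lam rho (sigMap lam rho z y) (sigMap lam rho z x) := by
  obtain ⟨b, rfl⟩ : ∃ b, lam x b = y := ⟨(lam x).symm y, by simp⟩
  obtain ⟨c, rfl⟩ : ∃ c, lam x (lam b c) = z := ⟨(lam b).symm ((lam x).symm z), by simp⟩
  have hz : lam x (lam b c) = lam (lam x b) (lam (rho b x) c) := (ybE h x b c).1.symm
  -- LHS
  have hL : sigMap lam rho (lam x (lam b c)) (sigMap lam rho (lam x b) x)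
      = lam (lam x b) (lam (lam (rho b x) c) (rho c (rho b x))) := by
    rw [sig_lam x b, hz, ← lam_sig h, sig_lam (rho b x) c]
  -- RHS pieces
  have hzy : sigMap lam rho (lam x (lam b c)) (lam x b)
      = lam (lam x (lam b c)) (lam (rho (lam b c) x) (rho c b)) := by
    rw [sigMap]
    congr 1
    have : (lam (lam x b)).symm (lam x (lam b c)) = lam (rho b x) c := by
      rw [Equiv.symm_apply_eq]; exact hz
    rw [this, (ybE h x b c).2.1]
  have hzx : sigMap lam rho (lam x (lam b c)) x
      = lam (lam x (lam b c)) (rho (lam b c) x) := sig_lam x (lam b c)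
  have hR : sigMap lam rho (sigMap lam rho (lam x (lam b c)) (lam x b))
        (sigMap lam rho (lam x (lam b c)) x)
      = lam (lam x (lam b c)) (lam (lam (rho (lam b c) x) (rho c b))
          (rho (rho c b) (rho (lam b c) x))) := by
    rw [hzy, hzx, ← lam_sig h, sig_lam (rho (lam b c) x) (rho c b)]
  rw [hL, hR, ← (ybE h x b c).2.2]
  -- lam (lam x b) (lam (lam (rho b x) c) t) = lam (lam x (lam b c)) (lam (lam (rho (lam b c) x) (rho c b)) t)
  have e1 := (ybE h (lam x b) (lam (rho b x) c) (rho c (rho b x))).1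
  rw [← e1, hz.symm, (ybE h x b c).2.1]

lemma sig_bijective [Finite X] (hb : Bijective (rMap lam rho)) (y : X) :
    Bijective (sigMap lam rho y) := by
  rw [← Finite.injective_iff_bijective]
  intro a b hab
  have ha : rMap lam rho (a, (lam a).symm y) = (y, (lam y).symm (sigMap lam rho y a)) := by
    simp [rMap, sigMap]
  have hbb : rMap lam rho (b, (lam b).symm y) = (y, (lam y).symm (sigMap lam rho y b)) := by
    simp [rMap, sigMap]
  have := hb.injective (ha.trans (by rw [hab, ← hbb]))
  exact congrArg Prod.fst this

lemma q_lam (h : IsYB (rMap lam rho)) (x d : X) :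
    qMap lam (lam x d) = lam (rho d x) (qMap lam d) := by
  rw [qMap, Equiv.symm_apply_eq]
  have := (ybE h x d (qMap lam d)).1
  rw [this]
  simp [qMap]

end Aux1

section Aux2
variable {X : Type*} (lam : X → Equiv.Perm X) (rho : X → X → X)

noncomputable def sigE [Finite X] (hb : Bijective (rMap lam rho)) (u : X) : Equiv.Perm X :=
  Equiv.ofBijective _ (sig_bijective hb u)

noncomputable def lamInv [Finite X] (hb : Bijective (rMap lam rho)) (u : X) : Equiv.Perm X :=
  (lam u).trans (sigE lam rho hb u).symm

noncomputable def rhoInv [Finite X] (hb : Bijective (rMap lam rho)) (t u : X) : X :=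
  (lam (lamInv lam rho hb u t)).symm u

variable {lam} {rho} [Finite X]

lemma lamInv_apply (hb : Bijective (rMap lam rho)) (u t : X) :
    lamInv lam rho hb u t = (sigE lam rho hb u).symm (lam u t) := rfl

lemma sigE_apply (hb : Bijective (rMap lam rho)) (u w : X) : sigE lam rho hb u w = sigMap lam rho u w := rfl

lemma lamInv_lam_rho (hb : Bijective (rMap lam rho)) (a b : X) : lamInv lam rho hb (lam a b) (rho b a) = a := by
  have h1 : lam (lam a b) (rho b a) = sigE lam rho hb (lam a b) a := (sig_lam a b).symm
  rw [lamInv_apply, h1, Equiv.symm_apply_apply]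

lemma rinv1 (hb : Bijective (rMap lam rho)) (p : X × X) :
    rMap lam rho (rMap (lamInv lam rho hb) (rhoInv lam rho hb) p) = p := by
  obtain ⟨u, t⟩ := p
  simp only [rMap, rhoInv, Prod.mk.injEq]
  refine ⟨Equiv.apply_symm_apply _ _, ?_⟩
  apply (lam u).injective
  have h2 : sigMap lam rho u (lamInv lam rho hb u t) = lam u t := by
    show sigE lam rho hb u (lamInv lam rho hb u t) = lam u t
    rw [lamInv_apply, Equiv.apply_symm_apply]
  exact h2

lemma rinv2 (hb : Bijective (rMap lam rho)) (p : X × X) :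
    rMap (lamInv lam rho hb) (rhoInv lam rho hb) (rMap lam rho p) = p := by
  obtain ⟨a, b⟩ := p
  simp only [rMap, rhoInv, Prod.mk.injEq]
  refine ⟨lamInv_lam_rho hb a b, ?_⟩
  rw [lamInv_lam_rho hb a b, Equiv.symm_apply_apply]

lemma ybInv (hb : Bijective (rMap lam rho)) (h : IsYB (rMap lam rho)) :
    IsYB (rMap (lamInv lam rho hb) (rhoInv lam rho hb)) := by
  have h12 : ∀ q, r12 (rMap lam rho) (r12 (rMap (lamInv lam rho hb) (rhoInv lam rho hb)) q) = q := by
    intro q; obtain ⟨a, b, c⟩ := q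
    simp only [r12]
    rw [show (((rMap (lamInv lam rho hb) (rhoInv lam rho hb) (a,b)).1,
      (rMap (lamInv lam rho hb) (rhoInv lam rho hb) (a,b)).2) : X × X)
      = rMap (lamInv lam rho hb) (rhoInv lam rho hb) (a,b) from rfl, rinv1 hb]
  have h12b : ∀ q, r12 (rMap (lamInv lam rho hb) (rhoInv lam rho hb)) (r12 (rMap lam rho) q) = q := by
    intro q; obtain ⟨a, b, c⟩ := q
    simp only [r12]
    rw [show (((rMap lam rho (a,b)).1, (rMap lam rho (a,b)).2) : X × X)
      = rMap lam rho (a,b) from rfl, rinv2 hb]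
  have h23 : ∀ q, r23 (rMap lam rho) (r23 (rMap (lamInv lam rho hb) (rhoInv lam rho hb)) q) = q := by
    intro q; obtain ⟨a, bc⟩ := q
    simp only [r23]
    rw [rinv1 hb]
  have h23b : ∀ q, r23 (rMap (lamInv lam rho hb) (rhoInv lam rho hb)) (r23 (rMap lam rho) q) = q := by
    intro q; obtain ⟨a, bc⟩ := q
    simp only [r23]
    rw [rinv2 hb]
  funext p
  show r12 _ (r23 _ (r12 _ p)) = r23 _ (r12 _ (r23 _ p))
  set s := r12 (rMap (lamInv lam rho hb) (rhoInv lam rho hb))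
    (r23 (rMap (lamInv lam rho hb) (rhoInv lam rho hb))
      (r12 (rMap (lamInv lam rho hb) (rhoInv lam rho hb)) p)) with hsdef
  have hsp1 : r12 (rMap lam rho) (r23 (rMap lam rho) (r12 (rMap lam rho) s)) = p := by
    rw [hsdef, h12, h23, h12]
  have hsp2 := hsp1
  have hyb := congrFun h s
  simp only [Function.comp_apply] at hyb
  rw [hyb] at hsp2
  conv_rhs => rw [← hsp2]
  rw [h23b, h12b, h23b]

lemma q_lamInv (hb : Bijective (rMap lam rho)) (hfix : ∀ u, sigMap lam rho u u = u) (u : X) :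
    qMap (lamInv lam rho hb) u = qMap lam u := by
  show (lamInv lam rho hb u).symm u = qMap lam u
  rw [Equiv.symm_apply_eq, lamInv_apply]
  have : lam u (qMap lam u) = u := Equiv.apply_symm_apply _ _
  rw [this, Equiv.eq_symm_apply]
  exact hfix u

lemma q_rho (hb : Bijective (rMap lam rho)) (h : IsYB (rMap lam rho)) (hfix : ∀ u, sigMap lam rho u u = u) (x c : X) :
    qMap lam (rho c x) = rho ((lam (qMap lam x)).symm c) (qMap lam x) := by
  have T1' := q_lam (ybInv hb h) (lam x c) (rho c x)
  rw [lamInv_lam_rho hb x c] at T1'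
  have e2 : rhoInv lam rho hb (rho c x) (lam x c) = c := by
    rw [rhoInv, lamInv_lam_rho hb x c, Equiv.symm_apply_apply]
  rw [e2, q_lamInv hb hfix, q_lamInv hb hfix, lamInv_apply, Equiv.eq_symm_apply] at T1'
  have T1'' : sigMap lam rho c (qMap lam x) = lam c (qMap lam (rho c x)) := T1'
  rw [sigMap] at T1''
  exact ((lam c).injective T1'').symm

end Aux2
section Aux3
variable {X : Type*} {lam : X → Equiv.Perm X} {rho : X → X → X}

lemma lamCab_succ_apply (k : ℕ) (x w : X) :
    lamCab lam (k+1) x w = lam x (lamCab lam k (qMap lam x) w) := rfl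

lemma lamCab_succ' (k : ℕ) (x : X) :
    lamCab lam (k+1) x = lamCab lam k x * lam ((qMap lam)^[k] x) := by
  induction k generalizing x with
  | zero => show lam x * lamCab lam 0 (qMap lam x) = lamCab lam 0 x * lam ((qMap lam)^[0] x)
            simp [lamCab]
  | succ k ih =>
      show lam x * lamCab lam (k+1) (qMap lam x) = _
      rw [ih, ← mul_assoc, ← Function.iterate_succ_apply]
      rfl

lemma lamCab_q_self (k : ℕ) (x : X) : lamCab lam k x ((qMap lam)^[k] x) = x := by
  induction k generalizing x with
  | zero => rfl
  | succ k ih =>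
      rw [lamCab_succ_apply, Function.iterate_succ_apply, ih (qMap lam x)]
      exact Equiv.apply_symm_apply _ _

lemma lamCab_symm_self (k : ℕ) (x : X) :
    (lamCab lam k x).symm x = (qMap lam)^[k] x := by
  rw [Equiv.symm_apply_eq]
  exact (lamCab_q_self k x).symm

lemma lamCab_sig (h : IsYB (rMap lam rho)) (k : ℕ) (x v w : X) :
    lamCab lam k x (sigMap lam rho v w)
      = sigMap lam rho (lamCab lam k x v) (lamCab lam k x w) := by
  induction k generalizing x with
  | zero => rfl
  | succ k ih => rw [lamCab_succ_apply, ih, lam_sig h]; rfl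

lemma lamCab_sig_iter (h : IsYB (rMap lam rho)) (k : ℕ) (x v : X) (m : ℕ) (w : X) :
    lamCab lam k x ((sigMap lam rho v)^[m] w)
      = (sigMap lam rho (lamCab lam k x v))^[m] (lamCab lam k x w) := by
  induction m generalizing w with
  | zero => rfl
  | succ m ih =>
      rw [Function.iterate_succ_apply, Function.iterate_succ_apply, ih, lamCab_sig h]

lemma lamCab_lam (h : IsYB (rMap lam rho))
    (ht2 : ∀ x c, qMap lam (rho c x) = rho ((lam (qMap lam x)).symm c) (qMap lam x))
    (k : ℕ) (x b w : X) :
    lamCab lam k x (lam b w)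
      = lam (lamCab lam k x b)
          (lamCab lam k (rho ((lam x).symm (lamCab lam k x b)) x) w) := by
  induction k generalizing x b w with
  | zero => rfl
  | succ k ih =>
      have hd : (lam x).symm (lamCab lam (k+1) x b) = lamCab lam k (qMap lam x) b := by
        rw [lamCab_succ_apply, Equiv.symm_apply_apply]
      rw [lamCab_succ_apply, ih, hd]
      have e1 := (ybE h x (lamCab lam k (qMap lam x) b)
        (lamCab lam k (rho ((lam (qMap lam x)).symm (lamCab lam k (qMap lam x) b)) (qMap lam x)) w)).1
      rw [← e1, ← ht2 x (lamCab lam k (qMap lam x) b)]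
      rfl

lemma q_lamCab (h : IsYB (rMap lam rho))
    (ht2 : ∀ x c, qMap lam (rho c x) = rho ((lam (qMap lam x)).symm c) (qMap lam x))
    (k : ℕ) (x b : X) :
    qMap lam (lamCab lam k x b)
      = lamCab lam k (rho ((lam x).symm (lamCab lam k x b)) x) (qMap lam b) := by
  induction k generalizing x b with
  | zero => rfl
  | succ k ih =>
      rw [lamCab_succ_apply, q_lam h, ih, Equiv.symm_apply_apply,
        ← ht2 x (lamCab lam k (qMap lam x) b)]
      rfl

end Aux3
section Aux4
variable {X : Type*}

def seqC (lam : X → Equiv.Perm X) (rho : X → X → X) (u : X) : ℕ → X → X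
  | 0, x => x
  | i+1, x => rho ((lam (seqC lam rho u i x)).symm ((qMap lam)^[i] u)) (seqC lam rho u i x)

variable {lam : X → Equiv.Perm X} {rho : X → X → X}

lemma seq_inv1 (h : IsYB (rMap lam rho))
    (ht2 : ∀ x c, qMap lam (rho c x) = rho ((lam (qMap lam x)).symm c) (qMap lam x))
    (k : ℕ) (x y : X) (i : ℕ) :
    lamCab lam k (seqC lam rho (lamCab lam k x y) i x) ((qMap lam)^[i] y)
      = (qMap lam)^[i] (lamCab lam k x y) := by
  induction i with
  | zero => rfl
  | succ i ih =>
      rw [Function.iterate_succ_apply' (qMap lam) i (lamCab lam k x y), ← ih,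
        q_lamCab h ht2, ih, Function.iterate_succ_apply' (qMap lam) i y]
      rfl

lemma seq_inv2 (h : IsYB (rMap lam rho))
    (ht2 : ∀ x c, qMap lam (rho c x) = rho ((lam (qMap lam x)).symm c) (qMap lam x))
    (k : ℕ) (x y : X) (i : ℕ) (w : X) :
    lamCab lam k x (lamCab lam i y w)
      = lamCab lam i (lamCab lam k x y)
          (lamCab lam k (seqC lam rho (lamCab lam k x y) i x) w) := by
  induction i generalizing w with
  | zero => rfl
  | succ i ih =>
      rw [lamCab_succ', Equiv.Perm.mul_apply, ih, lamCab_lam h ht2, seq_inv1 h ht2,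
        lamCab_succ' i (lamCab lam k x y), Equiv.Perm.mul_apply]
      rfl

lemma seq_k3 (h : IsYB (rMap lam rho)) (k : ℕ) (x y : X) (i : ℕ) :
    (sigMap lam rho (lamCab lam k x y))^[i] x
      = lamCab lam i (lamCab lam k x y) (seqC lam rho (lamCab lam k x y) i x) := by
  induction i with
  | zero => rfl
  | succ i ih =>
      have key := lamCab_sig h i (lamCab lam k x y) ((qMap lam)^[i] (lamCab lam k x y))
        (seqC lam rho (lamCab lam k x y) i x)
      rw [lamCab_q_self i (lamCab lam k x y)] at key
      rw [Function.iterate_succ_apply', ih, ← key, lamCab_succ', Equiv.Perm.mul_apply]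
      rfl

lemma rhoCab_eq_seq (h : IsYB (rMap lam rho)) (k : ℕ) (x y : X) :
    rhoCab lam rho k y x = seqC lam rho (lamCab lam k x y) k x := by
  show (lamCab lam k (lamCab lam k x y)).symm (sigCab lam rho k (lamCab lam k x y) x) = _
  rw [sigCab, seq_k3 h, Equiv.symm_apply_apply]

lemma lamCab_cocycle (h : IsYB (rMap lam rho))
    (ht2 : ∀ x c, qMap lam (rho c x) = rho ((lam (qMap lam x)).symm c) (qMap lam x))
    (k : ℕ) (x y w : X) :
    lamCab lam k (lamCab lam k x y) (lamCab lam k (rhoCab lam rho k y x) w)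
      = lamCab lam k x (lamCab lam k y w) := by
  rw [rhoCab_eq_seq h, ← seq_inv2 h ht2]

end Aux4
section Aux5
variable {X : Type*} {lam : X → Equiv.Perm X} {rho : X → X → X}

lemma rack_iter1 (h : IsYB (rMap lam rho)) (m : ℕ) (g v x : X) :
    (sigMap lam rho g)^[m] (sigMap lam rho v x)
      = sigMap lam rho ((sigMap lam rho g)^[m] v) ((sigMap lam rho g)^[m] x) := by
  induction m with
  | zero => rfl
  | succ m ih =>
      rw [Function.iterate_succ_apply', ih, rack h,
        ← Function.iterate_succ_apply' (sigMap lam rho g) m v,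
        ← Function.iterate_succ_apply' (sigMap lam rho g) m x]

lemma rack_iterk (h : IsYB (rMap lam rho)) (n m : ℕ) (g v x : X) :
    (sigMap lam rho g)^[n] ((sigMap lam rho v)^[m] x)
      = (sigMap lam rho ((sigMap lam rho g)^[n] v))^[m] ((sigMap lam rho g)^[n] x) := by
  induction m generalizing x with
  | zero => rfl
  | succ m ih =>
      rw [Function.iterate_succ_apply, Function.iterate_succ_apply, ih, rack_iter1 h]

lemma rackSig (h : IsYB (rMap lam rho)) (k : ℕ) (g v x : X) :
    sigCab lam rho k g (sigCab lam rho k v x)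
      = sigCab lam rho k (sigCab lam rho k g v) (sigCab lam rho k g x) :=
  rack_iterk h k k g v x

lemma lamCab_rhoCab (k : ℕ) (x y : X) :
    lamCab lam k (lamCab lam k x y) (rhoCab lam rho k y x)
      = sigCab lam rho k (lamCab lam k x y) x :=
  Equiv.apply_symm_apply _ _

lemma lamCab_sigCab (h : IsYB (rMap lam rho)) (k : ℕ) (x v w : X) :
    lamCab lam k x (sigCab lam rho k v w)
      = sigCab lam rho k (lamCab lam k x v) (lamCab lam k x w) :=
  lamCab_sig_iter h k x v k w

lemma cab_e2 (h : IsYB (rMap lam rho))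
    (ht2 : ∀ x c, qMap lam (rho c x) = rho ((lam (qMap lam x)).symm c) (qMap lam x))
    (k : ℕ) (x y z : X) :
    rhoCab lam rho k (lamCab lam k (rhoCab lam rho k y x) z) (lamCab lam k x y)
      = lamCab lam k (rhoCab lam rho k (lamCab lam k y z) x) (rhoCab lam rho k z y) := by
  have h1 : lamCab lam k (lamCab lam k x y) (lamCab lam k (rhoCab lam rho k y x) z)
      = lamCab lam k x (lamCab lam k y z) := lamCab_cocycle h ht2 k x y z
  show (lamCab lam k (lamCab lam k (lamCab lam k x y) (lamCab lam k (rhoCab lam rho k y x) z))).symm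
      (sigCab lam rho k (lamCab lam k (lamCab lam k x y) (lamCab lam k (rhoCab lam rho k y x) z))
        (lamCab lam k x y)) = _
  rw [h1, Equiv.symm_apply_eq,
    lamCab_cocycle h ht2 k x (lamCab lam k y z) (rhoCab lam rho k z y),
    lamCab_rhoCab k y z, lamCab_sigCab h k x (lamCab lam k y z) y]

lemma cab_e3 (h : IsYB (rMap lam rho))
    (ht2 : ∀ x c, qMap lam (rho c x) = rho ((lam (qMap lam x)).symm c) (qMap lam x))
    (k : ℕ) (x y z : X) :
    rhoCab lam rho k z (rhoCab lam rho k y x)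
      = rhoCab lam rho k (rhoCab lam rho k z y) (rhoCab lam rho k (lamCab lam k y z) x) := by
  have f1 : lamCab lam k (lamCab lam k x y) (lamCab lam k (rhoCab lam rho k y x) z)
      = lamCab lam k x (lamCab lam k y z) := lamCab_cocycle h ht2 k x y z
  -- f2 : Σ_d t = (Λ u)⁻¹ (Σ_w (Σ_u x))
  have f2 : sigCab lam rho k (lamCab lam k (rhoCab lam rho k y x) z) (rhoCab lam rho k y x)
      = (lamCab lam k (lamCab lam k x y)).symm
          (sigCab lam rho k (lamCab lam k x (lamCab lam k y z))
            (sigCab lam rho k (lamCab lam k x y) x)) := by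
    rw [Equiv.eq_symm_apply]
    have h' := lamCab_sigCab h k (lamCab lam k x y)
      (lamCab lam k (rhoCab lam rho k y x) z) (rhoCab lam rho k y x)
    rw [f1, lamCab_rhoCab k x y] at h'
    exact h'
  -- f4 : Λ_w g1 = Σ_w u
  have f4 : lamCab lam k (lamCab lam k x (lamCab lam k y z))
        (rhoCab lam rho k (lamCab lam k (rhoCab lam rho k y x) z) (lamCab lam k x y))
      = sigCab lam rho k (lamCab lam k x (lamCab lam k y z)) (lamCab lam k x y) := by
    have h' := lamCab_rhoCab (lam := lam) (rho := rho) k (lamCab lam k x y)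
      (lamCab lam k (rhoCab lam rho k y x) z)
    rw [f1] at h'
    exact h'
  -- f5 : Λ_w m = Σ_w x
  have f5 := lamCab_rhoCab (lam := lam) (rho := rho) k x (lamCab lam k y z)
  -- e2 instance : g1 = Λ_m n
  have e2 := cab_e2 h ht2 k x y z
  show (lamCab lam k (lamCab lam k (rhoCab lam rho k y x) z)).symm
      (sigCab lam rho k (lamCab lam k (rhoCab lam rho k y x) z) (rhoCab lam rho k y x)) = _
  rw [f2, rackSig h, ← f4, ← f5,
    ← lamCab_sigCab h k (lamCab lam k x (lamCab lam k y z))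
      (rhoCab lam rho k (lamCab lam k (rhoCab lam rho k y x) z) (lamCab lam k x y))
      (rhoCab lam rho k (lamCab lam k y z) x)]
  -- RHS unfold
  conv_rhs => rw [show rhoCab lam rho k (rhoCab lam rho k z y) (rhoCab lam rho k (lamCab lam k y z) x)
    = (lamCab lam k (lamCab lam k (rhoCab lam rho k (lamCab lam k y z) x) (rhoCab lam rho k z y))).symm
        (sigCab lam rho k
          (lamCab lam k (rhoCab lam rho k (lamCab lam k y z) x) (rhoCab lam rho k z y))
          (rhoCab lam rho k (lamCab lam k y z) x)) from rfl]
  rw [← e2]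
  -- key
  have key := lamCab_cocycle h ht2 k (lamCab lam k x y) (lamCab lam k (rhoCab lam rho k y x) z)
    ((lamCab lam k (rhoCab lam rho k (lamCab lam k (rhoCab lam rho k y x) z) (lamCab lam k x y))).symm
      (sigCab lam rho k (rhoCab lam rho k (lamCab lam k (rhoCab lam rho k y x) z) (lamCab lam k x y))
        (rhoCab lam rho k (lamCab lam k y z) x)))
  rw [f1, Equiv.apply_symm_apply] at key
  rw [key, Equiv.symm_apply_apply, Equiv.symm_apply_apply]

end Aux5
section Aux6
variable {X : Type*} {lam : X → Equiv.Perm X} {rho : X → X → X}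

lemma cab_sig (k : ℕ) (y x : X) :
    sigMap (lamCab lam k) (rhoCab lam rho k) y x = sigCab lam rho k y x := by
  show lamCab lam k y (rhoCab lam rho k ((lamCab lam k x).symm y) x) = _
  rw [show rhoCab lam rho k ((lamCab lam k x).symm y) x
      = (lamCab lam k (lamCab lam k x ((lamCab lam k x).symm y))).symm
          (sigCab lam rho k (lamCab lam k x ((lamCab lam k x).symm y)) x) from rfl]
  simp only [Equiv.apply_symm_apply]

lemma lam_q (x : X) : lam x (qMap lam x) = x := Equiv.apply_symm_apply _ _

lemma rho_q (hfix : ∀ u, sigMap lam rho u u = u) (x : X) :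
    rho (qMap lam x) x = qMap lam x := by
  have h2 : lam x (rho (qMap lam x) x) = x := hfix x
  apply (lam x).injective
  rw [h2, lam_q]

lemma q_injective (hρ : ∀ y, Bijective (rho y)) (hfix : ∀ u, sigMap lam rho u u = u) :
    Injective (qMap lam (X := X)) := by
  intro a b hab
  have ha := rho_q hfix a
  have hb' := rho_q hfix b
  rw [hab] at ha
  exact (hρ (qMap lam b)).injective (ha.trans hb'.symm)

lemma q_rhoCab (h : IsYB (rMap lam rho))
    (ht2 : ∀ x c, qMap lam (rho c x) = rho ((lam (qMap lam x)).symm c) (qMap lam x))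
    (k : ℕ) (x y : X) :
    (qMap lam)^[k] (rhoCab lam rho k y x)
      = (lamCab lam k y).symm (sigCab lam rho k y ((qMap lam)^[k] x)) := by
  rw [← lamCab_symm_self k (rhoCab lam rho k y x)]
  have hsig : lamCab lam k x (sigCab lam rho k y ((qMap lam)^[k] x))
      = sigCab lam rho k (lamCab lam k x y) x := by
    rw [lamCab_sigCab h k x y, ← lamCab_symm_self k x, Equiv.apply_symm_apply]
  have k2 : lamCab lam k (rhoCab lam rho k y x)
        ((lamCab lam k y).symm (sigCab lam rho k y ((qMap lam)^[k] x)))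
      = rhoCab lam rho k y x := by
    apply (lamCab lam k (lamCab lam k x y)).injective
    rw [lamCab_cocycle h ht2 k x y, Equiv.apply_symm_apply, hsig, lamCab_rhoCab k x y]
  rw [Equiv.symm_apply_eq]
  exact k2.symm

lemma rhoCab_bijective [Finite X] (h : IsYB (rMap lam rho))
    (hb : Bijective (rMap lam rho)) (hρ : ∀ y, Bijective (rho y))
    (hfix : ∀ u, sigMap lam rho u u = u)
    (ht2 : ∀ x c, qMap lam (rho c x) = rho ((lam (qMap lam x)).symm c) (qMap lam x))
    (k : ℕ) (y : X) : Bijective (rhoCab lam rho k y) := by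
  rw [← Finite.injective_iff_bijective]
  intro a b hab
  have h1 := congrArg (qMap lam)^[k] hab
  rw [q_rhoCab h ht2 k a y, q_rhoCab h ht2 k b y] at h1
  have h2 := ((sig_bijective hb y).iterate k).injective ((lamCab lam k y).symm.injective h1)
  exact (Injective.iterate (q_injective hρ hfix) k) h2

lemma rCab_bijective [Finite X] (hb : Bijective (rMap lam rho)) (k : ℕ) :
    Bijective (rMap (lamCab lam k) (rhoCab lam rho k)) := by
  rw [← Finite.injective_iff_bijective]
  rintro ⟨x1, y1⟩ ⟨x2, y2⟩ hpq
  simp only [rMap, Prod.mk.injEq] at hpq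
  obtain ⟨h1, h2⟩ := hpq
  rw [show rhoCab lam rho k y1 x1 = (lamCab lam k (lamCab lam k x1 y1)).symm
      (sigCab lam rho k (lamCab lam k x1 y1) x1) from rfl,
    show rhoCab lam rho k y2 x2 = (lamCab lam k (lamCab lam k x2 y2)).symm
      (sigCab lam rho k (lamCab lam k x2 y2) x2) from rfl, h1] at h2
  have hx : x1 = x2 :=
    ((sig_bijective hb (lamCab lam k x2 y2)).iterate k).injective
      ((lamCab lam k (lamCab lam k x2 y2)).symm.injective h2)
  subst hx
  have hy : y1 = y2 := (lamCab lam k x1).injective h1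
  rw [hy]

lemma cab_yb (h : IsYB (rMap lam rho))
    (ht2 : ∀ x c, qMap lam (rho c x) = rho ((lam (qMap lam x)).symm c) (qMap lam x))
    (k : ℕ) : IsYB (rMap (lamCab lam k) (rhoCab lam rho k)) := by
  funext p
  obtain ⟨x, y, z⟩ := p
  simp only [Function.comp_apply, r12, r23, rMap, Prod.mk.injEq]
  exact ⟨lamCab_cocycle h ht2 k x y z, cab_e2 h ht2 k x y z, cab_e3 h ht2 k x y z⟩

end Aux6



/-- the `k`-cabling of a finite biquandle is again a biquandle;
in particular `σ^{(k)}_x(x) = x` for all `x`, where `σ^{(k)}_x = σ_{kx} = σ_x^k`. -/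
theorem cabled_is_biquandle {X : Type*} [Finite X]
    (lam : X → Equiv.Perm X) (rho : X → X → X)
    (hbq : IsBiquandle lam rho) (k : ℕ) (hk : 0 < k) :
    IsBiquandle (lamCab lam k) (rhoCab lam rho k) ∧
    ∀ x : X, sigCab lam rho k x x = x := by
  
  obtain ⟨⟨hYB, hb, hρ⟩, hfix⟩ := hbq
  have ht2 := q_rho hb hYB hfix
  refine ⟨⟨⟨cab_yb hYB ht2 k, rCab_bijective hb k,
    fun y => rhoCab_bijective hYB hb hρ hfix ht2 k y⟩, ?_⟩, ?_⟩
  · intro x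
    rw [cab_sig]
    exact Function.iterate_fixed (hfix x) k
  · intro x
    exact Function.iterate_fixed (hfix x) k
end

section
/- Let f : (X,r) → (Y,s) be a morphism of finite biquandles and k a positive integer. Then the same map f is a morphism of the k-cabled solutions (X, r^{(k)}) → (Y, s^{(k)}). In particular, cabling is a functor from the category of biquandles to itself that is the identity on underlying maps. -/
open Function

section Aux

variable {X Y : Type*} (lamX : X → Equiv.Perm X) (rhoX : X → X → X)
    (lamY : Y → Equiv.Perm Y) (rhoY : Y → Y → Y)
    (f : X → Y) (hf : IsMor (rMap lamX rhoX) (rMap lamY rhoY) f)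

include hf

lemma f_lam (x y : X) : f (lamX x y) = lamY (f x) (f y) :=
  congrArg Prod.fst (hf (x, y))

lemma f_rho (x y : X) : f (rhoX y x) = rhoY (f y) (f x) :=
  congrArg Prod.snd (hf (x, y))

lemma f_lam_symm (x y : X) : f ((lamX x).symm y) = (lamY (f x)).symm (f y) := by
  have := f_lam lamX rhoX lamY rhoY f hf x ((lamX x).symm y)
  rw [Equiv.apply_symm_apply] at this
  rw [this, Equiv.symm_apply_apply]

lemma f_q (x : X) : f (qMap lamX x) = qMap lamY (f x) :=
  f_lam_symm lamX rhoX lamY rhoY f hf x x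

lemma f_lamCab (k : ℕ) (x y : X) :
    f (lamCab lamX k x y) = lamCab lamY k (f x) (f y) := by
  induction k generalizing x y with
  | zero => rfl
  | succ k ih =>
    simp only [lamCab, Equiv.Perm.mul_apply]
    rw [f_lam lamX rhoX lamY rhoY f hf, ih, f_q lamX rhoX lamY rhoY f hf]

lemma f_lamCab_symm (k : ℕ) (x y : X) :
    f ((lamCab lamX k x).symm y) = (lamCab lamY k (f x)).symm (f y) := by
  have := f_lamCab lamX rhoX lamY rhoY f hf k x ((lamCab lamX k x).symm y)
  rw [Equiv.apply_symm_apply] at this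
  rw [this, Equiv.symm_apply_apply]

lemma f_sig (y x : X) : f (sigMap lamX rhoX y x) = sigMap lamY rhoY (f y) (f x) := by
  unfold sigMap
  rw [f_lam lamX rhoX lamY rhoY f hf, f_rho lamX rhoX lamY rhoY f hf,
    f_lam_symm lamX rhoX lamY rhoY f hf]

lemma f_sigCab (k : ℕ) (y x : X) :
    f (sigCab lamX rhoX k y x) = sigCab lamY rhoY k (f y) (f x) := by
  induction k generalizing x with
  | zero => rfl
  | succ k ih =>
    simp only [sigCab, Function.iterate_succ_apply] at *
    rw [ih, f_sig lamX rhoX lamY rhoY f hf]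

lemma f_rhoCab (k : ℕ) (y x : X) :
    f (rhoCab lamX rhoX k y x) = rhoCab lamY rhoY k (f y) (f x) := by
  unfold rhoCab
  rw [f_lamCab_symm lamX rhoX lamY rhoY f hf,
    f_sigCab lamX rhoX lamY rhoY f hf, f_lamCab lamX rhoX lamY rhoY f hf]

end Aux

/-- a morphism of finite biquandles is also a morphism between the
`k`-cabled solutions; cabling is a functor that is the identity on underlying maps. -/
theorem cabling_preserves_morphisms {X Y : Type*} [Finite X] [Finite Y]
    (lamX : X → Equiv.Perm X) (rhoX : X → X → X)
    (lamY : Y → Equiv.Perm Y) (rhoY : Y → Y → Y)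
    (hX : IsBiquandle lamX rhoX) (hY : IsBiquandle lamY rhoY)
    (f : X → Y) (hf : IsMor (rMap lamX rhoX) (rMap lamY rhoY) f)
    (k : ℕ) (hk : 0 < k) :
    IsMor (rCab lamX rhoX k) (rCab lamY rhoY k) f := by
  intro p
  simp only [rCab, rMap, Prod.map]
  rw [f_lamCab lamX rhoX lamY rhoY f hf, f_rhoCab lamX rhoX lamY rhoY f hf]
end

section
/- Let S be a nonempty class of finite biquandles closed under cabling, and let T be the class of biquandles admitting a morphism (respectively epimorphism) of solutions to some member of S. Then T is closed under cabling. In particular, if a biquandle (X,r) is decomposable, then every k-cabling (X, r^{(k)}) is decomposable. -/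
open Function

section Defs

variable {X Y : Type*}

/-!
A morphism of solutions intertwines every `λ_x`, its inverse and every `ρ_y`, hence every map
built from them, such as `λ^{(k)}` (a product of `λ`'s at points obtained by `q`) and `ρ^{(k)}`
(built from `λ^{(k)}`, its inverse and iterates of `σ`). Likewise a part `A` with
`r(A × A) ⊆ A × A` is stable under `λ_x` and `ρ_y` for `x, y ∈ A` and, `X` being finite, under
`λ_x⁻¹`; hence under `r^{(k)}`, so a decomposition of `(X, r)` is one of `(X, r^{(k)})`.
-/

variable {X Y : Type*} {lam : X → Equiv.Perm X} {rho : X → X → X}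

theorem Function.Semiconj.perm_symm {f : X → Y} {g : Equiv.Perm X} {g' : Equiv.Perm Y}
    (h : Semiconj f g g') : Semiconj f g.symm g'.symm :=
  h.inverses_right g.apply_symm_apply g'.symm_apply_apply

theorem Set.MapsTo.perm_symm [Finite X] {A : Set X} {g : Equiv.Perm X}
    (h : Set.MapsTo g A A) : Set.MapsTo g.symm A A := by
  intro y hy
  have hbij : Set.BijOn g A A := (A.toFinite.injOn_iff_bijOn_of_mapsTo h).mp g.injective.injOn
  obtain ⟨x, hx, rfl⟩ := hbij.surjOn hy
  simpa using hx

namespace IsMor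

variable {l : Y → Equiv.Perm Y} {ρ : Y → Y → Y} {f : X → Y}

theorem semiconj_lam (h : IsMor (rMap lam rho) (rMap l ρ) f) (x : X) :
    Semiconj f (lam x) (l (f x)) :=
  fun y => congrArg Prod.fst (h (x, y))

theorem map_rho (h : IsMor (rMap lam rho) (rMap l ρ) f) (y x : X) : f (rho y x) = ρ (f y) (f x) :=
  congrArg Prod.snd (h (x, y))

theorem map_qMap (h : IsMor (rMap lam rho) (rMap l ρ) f) (x : X) : f (qMap lam x) = qMap l (f x) :=
  (h.semiconj_lam x).perm_symm x

theorem semiconj_lamCab (h : IsMor (rMap lam rho) (rMap l ρ) f) (k : ℕ) (x : X) :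
    Semiconj f (lamCab lam k x) (lamCab l k (f x)) := by
  induction k generalizing x with
  | zero => exact fun _ => rfl
  | succ k ih =>
    simpa only [lamCab, Equiv.Perm.coe_mul, h.map_qMap] using
      (h.semiconj_lam x).comp_right (ih (qMap lam x))

theorem semiconj_sigMap (h : IsMor (rMap lam rho) (rMap l ρ) f) (a : X) :
    Semiconj f (sigMap lam rho a) (sigMap l ρ (f a)) := by
  intro x
  simp only [sigMap, (h.semiconj_lam a).eq, h.map_rho, (h.semiconj_lam x).perm_symm.eq]

theorem map_rhoCab (h : IsMor (rMap lam rho) (rMap l ρ) f) (k : ℕ) (y x : X) :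
    f (rhoCab lam rho k y x) = rhoCab l ρ k (f y) (f x) := by
  simp only [rhoCab, sigCab, (h.semiconj_lamCab k _).perm_symm.eq,
    ((h.semiconj_sigMap _).iterate_right k).eq, (h.semiconj_lamCab k x).eq]

theorem rCab (h : IsMor (rMap lam rho) (rMap l ρ) f) (k : ℕ) :
    IsMor (rCab lam rho k) (rCab l ρ k) f :=
  fun p => Prod.ext ((h.semiconj_lamCab k p.1).eq p.2) (h.map_rhoCab k p.2 p.1)

end IsMor

section Invariant

variable {A : Set X}

theorem mapsTo_lam (hA : Set.MapsTo (rMap lam rho) (A ×ˢ A) (A ×ˢ A)) {x : X} (hx : x ∈ A) :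
    Set.MapsTo (lam x) A A :=
  fun _ hy => (hA (Set.mk_mem_prod hx hy)).1

theorem rho_mem (hA : Set.MapsTo (rMap lam rho) (A ×ˢ A) (A ×ˢ A))
    {x y : X} (hy : y ∈ A) (hx : x ∈ A) : rho y x ∈ A :=
  (hA (Set.mk_mem_prod hx hy)).2

theorem mapsTo_lamCab [Finite X] (hA : Set.MapsTo (rMap lam rho) (A ×ˢ A) (A ×ˢ A))
    (k : ℕ) {x : X} (hx : x ∈ A) :
    Set.MapsTo (lamCab lam k x) A A := by
  induction k generalizing x with
  | zero => exact fun _ hy => hy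
  | succ k ih =>
    exact (mapsTo_lam hA hx).comp (ih ((mapsTo_lam hA hx).perm_symm hx))

theorem mapsTo_sigMap [Finite X] (hA : Set.MapsTo (rMap lam rho) (A ×ˢ A) (A ×ˢ A))
    {a : X} (ha : a ∈ A) :
    Set.MapsTo (sigMap lam rho a) A A :=
  fun _ hx => mapsTo_lam hA ha (rho_mem hA ((mapsTo_lam hA hx).perm_symm ha) hx)

theorem rhoCab_mem [Finite X] (hA : Set.MapsTo (rMap lam rho) (A ×ˢ A) (A ×ˢ A))
    (k : ℕ) {x y : X} (hy : y ∈ A) (hx : x ∈ A) :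
    rhoCab lam rho k y x ∈ A :=
  have hxy := mapsTo_lamCab hA k hx hy
  (mapsTo_lamCab hA k hxy).perm_symm ((mapsTo_sigMap hA hxy).iterate k hx)

theorem mapsTo_rCab [Finite X] (hA : Set.MapsTo (rMap lam rho) (A ×ˢ A) (A ×ˢ A)) (k : ℕ) :
    Set.MapsTo (rCab lam rho k) (A ×ˢ A) (A ×ˢ A) :=
  fun _ hp => ⟨mapsTo_lamCab hA k hp.1 hp.2, rhoCab_mem hA k hp.2 hp.1⟩

end Invariant

theorem Decomposable.rCab [Finite X] (h : Decomposable (rMap lam rho)) (k : ℕ) :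
    Decomposable (rCab lam rho k) := by
  obtain ⟨A, B, hA, hB, hAB, hAB_univ, hAA, hBB⟩ := h
  exact ⟨A, B, hA, hB, hAB, hAB_univ,
    (mapsTo_rCab (Set.mapsTo_iff_image_subset.2 hAA) k).image_subset,
    (mapsTo_rCab (Set.mapsTo_iff_image_subset.2 hBB) k).image_subset⟩

theorem classes_closed_under_cabling_general
    (S : ∀ Z : Type, (Z → Equiv.Perm Z) → (Z → Z → Z) → Prop)
    (hScab : ∀ Z l ρ (k : ℕ), 0 < k → S Z l ρ → S Z (lamCab l k) (rhoCab l ρ k)) :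
    (∀ (X : Type) (lam : X → Equiv.Perm X) (rho : X → X → X),
      Finite X → IsBiquandle lam rho →
      (∃ (Z : Type) (l : Z → Equiv.Perm Z) (ρ : Z → Z → Z) (f : X → Z),
        S Z l ρ ∧ IsMor (rMap lam rho) (rMap l ρ) f) →
      ∀ k : ℕ, 0 < k →
      ∃ (Z : Type) (l : Z → Equiv.Perm Z) (ρ : Z → Z → Z) (f : X → Z),
        S Z l ρ ∧ IsMor (rCab lam rho k) (rMap l ρ) f) ∧
    (∀ (X : Type) (lam : X → Equiv.Perm X) (rho : X → X → X),
      Finite X → IsBiquandle lam rho →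
      (∃ (Z : Type) (l : Z → Equiv.Perm Z) (ρ : Z → Z → Z) (f : X → Z),
        S Z l ρ ∧ Function.Surjective f ∧ IsMor (rMap lam rho) (rMap l ρ) f) →
      ∀ k : ℕ, 0 < k →
      ∃ (Z : Type) (l : Z → Equiv.Perm Z) (ρ : Z → Z → Z) (f : X → Z),
        S Z l ρ ∧ Function.Surjective f ∧ IsMor (rCab lam rho k) (rMap l ρ) f) ∧
    (∀ (X : Type) (lam : X → Equiv.Perm X) (rho : X → X → X),
      Finite X → IsBiquandle lam rho → Decomposable (rMap lam rho) →
      ∀ k : ℕ, 0 < k → Decomposable (rCab lam rho k)) := by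
  refine ⟨?_, ?_, ?_⟩
  · rintro X lam rho - - ⟨Z, l, ρ, f, hS, hf⟩ k hk
    exact ⟨Z, lamCab l k, rhoCab l ρ k, f, hScab Z l ρ k hk hS, hf.rCab k⟩
  · rintro X lam rho - - ⟨Z, l, ρ, f, hS, hsurj, hf⟩ k hk
    exact ⟨Z, lamCab l k, rhoCab l ρ k, f, hScab Z l ρ k hk hS, hsurj, hf.rCab k⟩
  · rintro X lam rho _ - h k -
    exact h.rCab k

/-- if `S` is a nonempty class of finite biquandles closed under cabling,
then the class `T` of biquandles with a homomorphism (resp. epimorphism) to a member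
of `S` is closed under cabling; in particular decomposability of biquandles is
preserved under cabling. -/
theorem classes_closed_under_cabling
    (S : ∀ Z : Type, (Z → Equiv.Perm Z) → (Z → Z → Z) → Prop)
    (hSne : ∃ Z l ρ, S Z l ρ)
    (hSbq : ∀ Z l ρ, S Z l ρ → Finite Z ∧ IsBiquandle l ρ)
    (hScab : ∀ Z l ρ (k : ℕ), 0 < k → S Z l ρ → S Z (lamCab l k) (rhoCab l ρ k)) :
    (∀ (X : Type) (lam : X → Equiv.Perm X) (rho : X → X → X),
      Finite X → IsBiquandle lam rho →
      (∃ (Z : Type) (l : Z → Equiv.Perm Z) (ρ : Z → Z → Z) (f : X → Z),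
        S Z l ρ ∧ IsMor (rMap lam rho) (rMap l ρ) f) →
      ∀ k : ℕ, 0 < k →
      ∃ (Z : Type) (l : Z → Equiv.Perm Z) (ρ : Z → Z → Z) (f : X → Z),
        S Z l ρ ∧ IsMor (rCab lam rho k) (rMap l ρ) f) ∧
    (∀ (X : Type) (lam : X → Equiv.Perm X) (rho : X → X → X),
      Finite X → IsBiquandle lam rho →
      (∃ (Z : Type) (l : Z → Equiv.Perm Z) (ρ : Z → Z → Z) (f : X → Z),
        S Z l ρ ∧ Function.Surjective f ∧ IsMor (rMap lam rho) (rMap l ρ) f) →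
      ∀ k : ℕ, 0 < k →
      ∃ (Z : Type) (l : Z → Equiv.Perm Z) (ρ : Z → Z → Z) (f : X → Z),
        S Z l ρ ∧ Function.Surjective f ∧ IsMor (rCab lam rho k) (rMap l ρ) f) ∧
    (∀ (X : Type) (lam : X → Equiv.Perm X) (rho : X → X → X),
      Finite X → IsBiquandle lam rho → Decomposable (rMap lam rho) →
      ∀ k : ℕ, 0 < k → Decomposable (rCab lam rho k)) :=
  classes_closed_under_cabling_general S hScab
end Defs
end

section
/- Let (X,r) be a finite biquandle of Dehornoy class d, and let k be a positive integer coprime to d. If (X,r) is indecomposable (respectively simple), then the k-cabled solution (X, r^{(k)}) is indecomposable (respectively simple). -/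
/-!
Cabling composes, `(r^{(k)})^{(l)} = r^{(kl)}`, and `r^{(m)}` depends only on `m` modulo the
Dehornoy class `d`. Choosing `l` with `kl ≡ 1 (mod d)` therefore recovers `r` as the `l`-cabling
of `r^{(k)}`. Cabling preserves subsolutions (on a finite set, a permutation mapping a subset
into itself also maps it onto itself, so the subset is closed under `λ_a⁻¹`, hence under `q`,
`λ_{nx}` and `σ`) and morphisms, so a decomposition or a proper epimorphic image of `r^{(k)}`
yields one of `r`.
-/

open Function

open Set

section Cabling

variable {X : Type*}

lemma lamCab_add (lam : X → Equiv.Perm X) (a b : ℕ) (x : X) :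
    lamCab lam (a + b) x = lamCab lam a x * lamCab lam b ((qMap lam)^[a] x) := by
  induction a generalizing x with
  | zero => simp [lamCab]
  | succ n ih =>
    rw [Nat.add_right_comm, lamCab, ih, lamCab, mul_assoc, iterate_succ_apply]

lemma qMap_lamCab (lam : X → Equiv.Perm X) (k : ℕ) : qMap (lamCab lam k) = (qMap lam)^[k] := by
  funext x
  induction k generalizing x with
  | zero => rfl
  | succ n ih => exact ih (qMap lam x)

lemma lamCab_lamCab (lam : X → Equiv.Perm X) (k l : ℕ) :
    lamCab (lamCab lam k) l = lamCab lam (k * l) := by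
  funext x
  induction l generalizing x with
  | zero => rfl
  | succ n ih => rw [lamCab, qMap_lamCab, ih, Nat.mul_succ, add_comm, lamCab_add]

lemma sigMap_lamCab_rhoCab (lam : X → Equiv.Perm X) (rho : X → X → X) (k : ℕ) :
    sigMap (lamCab lam k) (rhoCab lam rho k) = sigCab lam rho k := by
  funext y x
  simp [sigMap, rhoCab]

lemma sigCab_lamCab_rhoCab (lam : X → Equiv.Perm X) (rho : X → X → X) (k l : ℕ) :
    sigCab (lamCab lam k) (rhoCab lam rho k) l = sigCab lam rho (k * l) := by
  funext y
  rw [sigCab, sigMap_lamCab_rhoCab, sigCab, sigCab, iterate_mul]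

/-- `(r^{(k)})^{(l)} = r^{(kl)}`. -/
lemma rCab_lamCab_rhoCab (lam : X → Equiv.Perm X) (rho : X → X → X) (k l : ℕ) :
    rCab (lamCab lam k) (rhoCab lam rho k) l = rCab lam rho (k * l) := by
  funext p
  simp only [rCab, rMap, rhoCab, lamCab_lamCab, sigCab_lamCab_rhoCab]

lemma rCab_one (lam : X → Equiv.Perm X) (rho : X → X → X) : rCab lam rho 1 = rMap lam rho := by
  funext p
  simp [rCab, rMap, rhoCab, lamCab, sigCab, sigMap]

lemma rCab_periodic (lam : X → Equiv.Perm X) (rho : X → X → X) {d : ℕ}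
    (hper : ∀ x : X, lamCab lam d x = 1 ∧ sigCab lam rho d x = id) :
    Periodic (rCab lam rho) d := by
  intro m
  have hlam : lamCab lam (m + d) = lamCab lam m := by
    funext x
    rw [lamCab_add, (hper _).1, mul_one]
  have hsig : sigCab lam rho (m + d) = sigCab lam rho m := by
    funext y
    rw [sigCab, iterate_add]
    change sigCab lam rho m y ∘ sigCab lam rho d y = _
    rw [(hper y).2, comp_id]
  funext p
  simp only [rCab, rMap, rhoCab, hlam, hsig]

lemma exists_mul_modEq_one {k d : ℕ} (hcop : k.Coprime d) (hd : 0 < d) :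
    ∃ l, k * l ≡ 1 [MOD d] := by
  refine ⟨k ^ (d.totient - 1), ?_⟩
  rw [← pow_succ', Nat.sub_add_cancel (Nat.totient_pos.mpr hd)]
  exact Nat.ModEq.pow_totient hcop

lemma exists_rCab_lamCab_rhoCab_eq (lam : X → Equiv.Perm X) (rho : X → X → X) {d k : ℕ}
    (hd : 0 < d) (hper : ∀ x : X, lamCab lam d x = 1 ∧ sigCab lam rho d x = id)
    (hcop : k.Coprime d) :
    ∃ l, rCab (lamCab lam k) (rhoCab lam rho k) l = rMap lam rho := by
  obtain ⟨l, hl⟩ := exists_mul_modEq_one hcop hd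
  refine ⟨l, ?_⟩
  have hmod := (rCab_periodic lam rho hper).map_mod_nat
  rw [rCab_lamCab_rhoCab, ← hmod, hl, hmod, rCab_one]

end Cabling

lemma Set.MapsTo.perm_symm_s14 {X : Type*} [Finite X] {e : Equiv.Perm X} {A : Set X}
    (h : MapsTo e A A) : MapsTo e.symm A A :=
  ((A.toFinite.injOn_iff_bijOn_of_mapsTo h).mp e.injective.injOn).equiv_symm.mapsTo

section Subsolution

variable {X : Type*} {lam : X → Equiv.Perm X} {rho : X → X → X} {A : Set X}

lemma mapsTo_rMap_iff :
    MapsTo (rMap lam rho) (A ×ˢ A) (A ×ˢ A) ↔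
      (∀ a ∈ A, MapsTo (lam a) A A) ∧ ∀ b ∈ A, MapsTo (rho b) A A := by
  refine ⟨fun h => ⟨fun a ha b hb => (@h (a, b) ⟨ha, hb⟩).1,
    fun b hb a ha => (@h (a, b) ⟨ha, hb⟩).2⟩, ?_⟩
  rintro ⟨hlam, hrho⟩ ⟨a, b⟩ ⟨ha, hb⟩
  exact ⟨hlam a ha hb, hrho b hb ha⟩

variable [Finite X]

lemma mapsTo_lamCab_s14 (hlam : ∀ a ∈ A, MapsTo (lam a) A A) (n : ℕ) :
    ∀ a ∈ A, MapsTo (lamCab lam n a) A A := by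
  induction n with
  | zero => exact fun _ _ => mapsTo_id A
  | succ n ih => exact fun a ha => (hlam a ha).comp (ih _ ((hlam a ha).perm_symm_s14 ha))

lemma mapsTo_sigMap_s14 (hlam : ∀ a ∈ A, MapsTo (lam a) A A) (hrho : ∀ b ∈ A, MapsTo (rho b) A A)
    {y : X} (hy : y ∈ A) : MapsTo (sigMap lam rho y) A A :=
  fun _ hx => hlam y hy (hrho _ ((hlam _ hx).perm_symm_s14 hy) hx)

lemma mapsTo_rhoCab (hlam : ∀ a ∈ A, MapsTo (lam a) A A) (hrho : ∀ b ∈ A, MapsTo (rho b) A A)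
    (n : ℕ) {b : X} (hb : b ∈ A) : MapsTo (rhoCab lam rho n b) A A := fun a ha =>
  have hc := mapsTo_lamCab_s14 hlam n a ha hb
  (mapsTo_lamCab_s14 hlam n _ hc).perm_symm_s14 ((mapsTo_sigMap_s14 hlam hrho hc).iterate n ha)

lemma mapsTo_rCab_of_mapsTo_rMap (h : MapsTo (rMap lam rho) (A ×ˢ A) (A ×ˢ A)) (n : ℕ) :
    MapsTo (rCab lam rho n) (A ×ˢ A) (A ×ˢ A) := by
  obtain ⟨hlam, hrho⟩ := mapsTo_rMap_iff.mp h
  exact mapsTo_rMap_iff.mpr ⟨mapsTo_lamCab_s14 hlam n, fun b hb => mapsTo_rhoCab hlam hrho n hb⟩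

lemma decomposable_rCab (h : Decomposable (rMap lam rho)) (n : ℕ) :
    Decomposable (rCab lam rho n) := by
  obtain ⟨A, B, hA, hB, hdisj, hunion, hAA, hBB⟩ := h
  have hcab {S : Set X} (hS : rMap lam rho '' S ×ˢ S ⊆ S ×ˢ S) :
      rCab lam rho n '' S ×ˢ S ⊆ S ×ˢ S :=
    (mapsTo_rCab_of_mapsTo_rMap (mapsTo_iff_image_subset.mpr hS) n).image_subset
  exact ⟨A, B, hA, hB, hdisj, hunion, hcab hAA, hcab hBB⟩

end Subsolution

section Morphism

variable {X Z : Type*} {lam : X → Equiv.Perm X} {rho : X → X → X}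
  {lam' : Z → Equiv.Perm Z} {rho' : Z → Z → Z} {f : X → Z}

lemma isMor_rMap_iff :
    IsMor (rMap lam rho) (rMap lam' rho') f ↔
      (∀ a, Semiconj f (lam a) (lam' (f a))) ∧ ∀ b, Semiconj f (rho b) (rho' (f b)) := by
  refine ⟨fun h => ⟨fun a b => congrArg Prod.fst (h (a, b)),
    fun b a => congrArg Prod.snd (h (a, b))⟩, ?_⟩
  rintro ⟨hlam, hrho⟩ ⟨a, b⟩
  exact Prod.ext (hlam a b) (hrho b a)

lemma semiconj_perm_symm {e : Equiv.Perm X} {e' : Equiv.Perm Z} (h : Semiconj f e e') :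
    Semiconj f e.symm e'.symm :=
  h.inverses_right e.right_inv e'.left_inv

lemma semiconj_lamCab (hlam : ∀ a, Semiconj f (lam a) (lam' (f a))) (n : ℕ) (a : X) :
    Semiconj f (lamCab lam n a) (lamCab lam' n (f a)) := by
  induction n generalizing a with
  | zero => exact Semiconj.id_right
  | succ n ih =>
    have hq : f (qMap lam a) = qMap lam' (f a) := semiconj_perm_symm (hlam a) a
    have := (hlam a).comp_right (ih (qMap lam a))
    rwa [hq] at this

lemma semiconj_sigMap (hlam : ∀ a, Semiconj f (lam a) (lam' (f a)))
    (hrho : ∀ b, Semiconj f (rho b) (rho' (f b))) (y : X) :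
    Semiconj f (sigMap lam rho y) (sigMap lam' rho' (f y)) := fun x => by
  simp only [sigMap, hlam y _, hrho _ x, semiconj_perm_symm (hlam x) y]

lemma semiconj_rhoCab (hlam : ∀ a, Semiconj f (lam a) (lam' (f a)))
    (hrho : ∀ b, Semiconj f (rho b) (rho' (f b))) (n : ℕ) (b : X) :
    Semiconj f (rhoCab lam rho n b) (rhoCab lam' rho' n (f b)) := fun a => by
  rw [rhoCab, rhoCab, ← semiconj_lamCab hlam n a b, semiconj_perm_symm (semiconj_lamCab hlam n _)]
  exact congrArg _ ((semiconj_sigMap hlam hrho _).iterate_right n a)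

lemma isMor_rCab (h : IsMor (rMap lam rho) (rMap lam' rho') f) (n : ℕ) :
    IsMor (rCab lam rho n) (rCab lam' rho' n) f := by
  obtain ⟨hlam, hrho⟩ := isMor_rMap_iff.mp h
  exact isMor_rMap_iff.mpr ⟨semiconj_lamCab hlam n, semiconj_rhoCab hlam hrho n⟩

lemma exists_eq_rMap_of_isMor [Finite Z] {s : Z × Z → Z × Z}
    (hmor : IsMor (rMap lam rho) s f) (hf : Surjective f) :
    ∃ (lam' : Z → Equiv.Perm Z) (rho' : Z → Z → Z), s = rMap lam' rho' := by
  have hbij (z : Z) : Bijective fun w => (s (z, w)).1 := by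
    obtain ⟨a, rfl⟩ := hf z
    refine Finite.surjective_iff_bijective.mp fun w => ?_
    obtain ⟨c, rfl⟩ := hf w
    refine ⟨f ((lam a).symm c), ?_⟩
    simpa [rMap] using (congrArg Prod.fst (hmor (a, (lam a).symm c))).symm
  exact ⟨fun z => Equiv.ofBijective _ (hbij z), fun w z => (s (z, w)).2, rfl⟩

end Morphism

theorem cabling_preserves_simple_indecomposable_general {X : Type u} [Finite X]
    (lam : X → Equiv.Perm X) (rho : X → X → X)
    (d k : ℕ)
    (hd : IsLeast {e : ℕ | 0 < e ∧ ∀ x : X, lamCab lam e x = 1 ∧ sigCab lam rho e x = id} d)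
    (hcop : Nat.Coprime k d) :
    (¬ Decomposable (rMap lam rho) → ¬ Decomposable (rCab lam rho k)) ∧
    (SimpleSol.{u} (rMap lam rho) → SimpleSol.{u} (rCab lam rho k)) := by
  obtain ⟨l, hl⟩ := exists_rCab_lamCab_rhoCab_eq lam rho hd.1.1 hd.1.2 hcop
  refine ⟨fun hind hdec => hind (hl ▸ decomposable_rCab hdec l), fun hs Z s f hf hmor => ?_⟩
  have : Finite Z := Finite.of_surjective f hf
  obtain ⟨lam', rho', rfl⟩ := exists_eq_rMap_of_isMor hmor hf
  exact hs Z _ f hf (hl ▸ isMor_rCab hmor l)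

/-- if `(X,r)` is a finite biquandle of Dehornoy class `d` and `k` is a
positive integer coprime to `d`, then indecomposability and simplicity are preserved
under `k`-cabling. -/
theorem cabling_preserves_simple_indecomposable {X : Type u} [Finite X] [Nonempty X]
    (lam : X → Equiv.Perm X) (rho : X → X → X)
    (hbq : IsBiquandle lam rho) (d k : ℕ)
    (hd : IsLeast {e : ℕ | 0 < e ∧ ∀ x : X, lamCab lam e x = 1 ∧ sigCab lam rho e x = id} d)
    (hk : 0 < k) (hcop : Nat.Coprime k d) :
    (¬ Decomposable (rMap lam rho) → ¬ Decomposable (rCab lam rho k)) ∧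
    (SimpleSol.{u} (rMap lam rho) → SimpleSol.{u} (rCab lam rho k)) :=
  cabling_preserves_simple_indecomposable_general lam rho d k hd hcop
end

section
/- Let (X,r) be an injective finite bijective non-degenerate solution (the canonical map X → G(X,r) is injective). Then its retract Ret(X,r) is injective. -/
open Function

section Aux

variable {X : Type*} (lam : X → Equiv.Perm X) (rho : X → X → X)

/-- `D_x(w) = ρ_{λ_w⁻¹(x)}(w)`; note `σ_x = λ_x ∘ D_x`. -/
def Dmap (x : X) : X → X := fun w => rho ((lam w).symm x) w

theorem sig_eq_Dmap (x w : X) : sigMap lam rho x w = lam x (Dmap lam rho x w) := rfl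

/-- The permutation `f_x(z) = (r⁻¹(x,z)).1`, i.e. the inverse of `D_x`. -/
noncomputable def fPerm (h : Function.Bijective (rMap lam rho)) (x : X) : Equiv.Perm X where
  toFun := fun z => ((Equiv.ofBijective _ h).symm (x, z)).1
  invFun := Dmap lam rho x
  left_inv := by
    intro z
    set e := Equiv.ofBijective _ h with he
    have hp : rMap lam rho (e.symm (x, z)) = (x, z) := e.apply_symm_apply (x, z)
    set p := e.symm (x, z) with hpdef
    have h1 : lam p.1 p.2 = x := congrArg Prod.fst hp
    have h2 : rho p.2 p.1 = z := congrArg Prod.snd hp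
    have h3 : (lam p.1).symm x = p.2 := by rw [← h1]; exact (lam p.1).symm_apply_apply p.2
    show Dmap lam rho x p.1 = z
    rw [Dmap, h3, h2]
  right_inv := by
    intro w
    set e := Equiv.ofBijective _ h with he
    have key : rMap lam rho (w, (lam w).symm x) = (x, Dmap lam rho x w) := by
      simp [rMap, Dmap]
    show (e.symm (x, Dmap lam rho x w)).1 = w
    rw [← key]
    have : rMap lam rho (w, (lam w).symm x) = e (w, (lam w).symm x) := rfl
    rw [this, e.symm_apply_apply]

theorem fPerm_eq (h : Function.Bijective (rMap lam rho)) {x z w v : X}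
    (hr : rMap lam rho (w, v) = (x, z)) : fPerm lam rho h x z = w := by
  have : (x, z) = Equiv.ofBijective _ h (w, v) := hr.symm
  show ((Equiv.ofBijective _ h).symm (x, z)).1 = w
  rw [this, Equiv.symm_apply_apply]

theorem fPerm_symm_apply (h : Function.Bijective (rMap lam rho)) (x w : X) :
    (fPerm lam rho h x).symm w = Dmap lam rho x w := rfl

theorem lam_mul_eq (hyb : IsYB (rMap lam rho)) (x y : X) :
    lam x * lam y = lam (lam x y) * lam (rho y x) := by
  ext z
  have h := congrFun hyb (x, y, z)
  have h1 := congrArg (fun p : X × X × X => p.1) h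
  simp only [Function.comp_apply, r12, r23, rMap] at h1
  simpa [Equiv.Perm.mul_apply] using h1.symm

theorem fPerm_mul_eq (h : Function.Bijective (rMap lam rho)) (hyb : IsYB (rMap lam rho))
    (x y : X) : fPerm lam rho h x * fPerm lam rho h y
      = fPerm lam rho h (lam x y) * fPerm lam rho h (rho y x) := by
  ext z
  obtain ⟨⟨b, c⟩, hbc⟩ := h.2 (y, z)
  obtain ⟨⟨a, d⟩, had⟩ := h.2 (x, b)
  have h1 : fPerm lam rho h y z = b := fPerm_eq lam rho h hbc
  have h2 : fPerm lam rho h x b = a := fPerm_eq lam rho h had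
  obtain ⟨⟨d', c'⟩, hdc⟩ : ∃ p, rMap lam rho (d, c) = p := ⟨_, rfl⟩
  obtain ⟨⟨a1, a2⟩, hadp⟩ : ∃ p, rMap lam rho (a, d') = p := ⟨_, rfl⟩
  obtain ⟨⟨m1, m2⟩, hm⟩ : ∃ p, rMap lam rho (a2, c') = p := ⟨_, rfl⟩
  have hxy : rMap lam rho (x, y) = (lam x y, rho y x) := rfl
  have hybt := congrFun hyb (a, d, c)
  simp only [Function.comp_apply, r12, r23, had, hbc, hdc, hadp, hm, hxy] at hybt
  obtain ⟨e1, e2, e3⟩ : lam x y = a1 ∧ rho y x = m1 ∧ z = m2 := by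
    simpa [Prod.ext_iff] using hybt
  have h3 : fPerm lam rho h (rho y x) z = a2 :=
    fPerm_eq lam rho h (v := c') (by rw [hm, ← e2, ← e3])
  have h4 : fPerm lam rho h (lam x y) a2 = a :=
    fPerm_eq lam rho h (v := d') (by rw [hadp, ← e1])
  simp only [Equiv.Perm.mul_apply, h1, h2, h3, h4]

end Aux

/-- The retract relation: `x ∼ y` iff `λ_x = λ_y` and `σ_x = σ_y`. -/
def retSetoid {X : Type*} (lam : X → Equiv.Perm X) (rho : X → X → X) : Setoid X :=
  Setoid.ker fun x => (lam x, sigMap lam rho x)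

/-- if `(X,r)` is an injective finite solution (the canonical map into
its structure group is injective), then its retract `Ret(X,r)` is injective. -/
theorem retract_of_injective_is_injective {X : Type*} [Finite X]
    (lam : X → Equiv.Perm X) (rho : X → X → X) (hsol : IsSolution lam rho)
    (hinj : Function.Injective
      (fun x : X => (PresentedGroup.of x : PresentedGroup (relsOf (fun x y => lam x y) rho))))
    (lamQ rhoQ : Quotient (retSetoid lam rho) → Quotient (retSetoid lam rho) →
      Quotient (retSetoid lam rho))
    (hlamQ : ∀ x y : X, lamQ (Quotient.mk (retSetoid lam rho) x) (Quotient.mk (retSetoid lam rho) y)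
      = Quotient.mk (retSetoid lam rho) (lam x y))
    (hrhoQ : ∀ x y : X, rhoQ (Quotient.mk (retSetoid lam rho) y) (Quotient.mk (retSetoid lam rho) x)
      = Quotient.mk (retSetoid lam rho) (rho y x)) :
    Function.Injective
      (fun q : Quotient (retSetoid lam rho) =>
        (PresentedGroup.of q : PresentedGroup (relsOf lamQ rhoQ))) := by
  
  classical
  obtain ⟨hyb, hbij, -⟩ := hsol
  have hresp : ∀ x y : X, (retSetoid lam rho).r x y →
      ((lam x, fPerm lam rho hbij x) : Equiv.Perm X × Equiv.Perm X)
        = (lam y, fPerm lam rho hbij y) := by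
    intro x y hxy
    have h1 : lam x = lam y := congrArg Prod.fst hxy
    have h2 : sigMap lam rho x = sigMap lam rho y := congrArg Prod.snd hxy
    have h3 : fPerm lam rho hbij x = fPerm lam rho hbij y := by
      have hsymm : (fPerm lam rho hbij x).symm = (fPerm lam rho hbij y).symm := by
        ext w
        rw [fPerm_symm_apply, fPerm_symm_apply]
        have hw := congrFun h2 w
        rw [sig_eq_Dmap, sig_eq_Dmap, h1] at hw
        exact (lam y).injective hw
      simpa using congrArg Equiv.symm hsymm
    rw [h1, h3]
  set F : Quotient (retSetoid lam rho) → Equiv.Perm X × Equiv.Perm X :=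
    Quotient.lift (fun x => (lam x, fPerm lam rho hbij x)) hresp with hF
  have hFmk : ∀ x : X, F (Quotient.mk (retSetoid lam rho) x)
      = (lam x, fPerm lam rho hbij x) := fun x => rfl
  have hrels : ∀ w ∈ relsOf lamQ rhoQ, FreeGroup.lift F w = 1 := by
    rintro w ⟨q1, q2, rfl⟩
    obtain ⟨x, rfl⟩ := Quotient.exists_rep q1
    obtain ⟨y, rfl⟩ := Quotient.exists_rep q2
    rw [map_mul, map_mul, map_inv, map_mul, FreeGroup.lift_apply_of, FreeGroup.lift_apply_of,
      FreeGroup.lift_apply_of, FreeGroup.lift_apply_of, hlamQ, hrhoQ, hFmk, hFmk, hFmk, hFmk,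
      mul_inv_eq_one, Prod.mk_mul_mk, Prod.mk_mul_mk]
    exact Prod.ext (lam_mul_eq lam rho hyb x y) (fPerm_mul_eq lam rho hbij hyb x y)
  intro q1 q2 hq
  have hFq : F q1 = F q2 := by
    have h := congrArg (PresentedGroup.toGroup hrels) hq
    rwa [PresentedGroup.toGroup.of, PresentedGroup.toGroup.of] at h
  revert hFq
  refine Quotient.inductionOn₂ q1 q2 ?_
  intro x y hF
  rw [hFmk, hFmk] at hF
  have h1 : lam x = lam y := congrArg Prod.fst hF
  have h3 : fPerm lam rho hbij x = fPerm lam rho hbij y := congrArg Prod.snd hF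
  apply Quotient.sound
  show (lam x, sigMap lam rho x) = (lam y, sigMap lam rho y)
  have h2 : sigMap lam rho x = sigMap lam rho y := by
    funext w
    rw [sig_eq_Dmap, sig_eq_Dmap, h1, ← fPerm_symm_apply lam rho hbij,
      ← fPerm_symm_apply lam rho hbij, h3]
  rw [h1, h2]
end
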